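/- arXiv:1106.4377 — 10 statements merged into one kernel-verified Lean document; each statement's English description precedes it below -/
import Mathlib

section
/- Let f be a normalized analytic function that is univalent on the open unit disk 𝔻. Then Re(1 + (z − ζ)·f''(z)/f'(z)) ≥ 0 for all z, ζ ∈ 𝔻 if and only if Re(1 + z·f''(z)/f'(z)) > |z·f''(z)/f'(z)| for all z ∈ 𝔻. (Thus the two-variable and one-variable analytic characterizations of uniformly convex functions agree.) -/
open Complex Metric Set

noncomputable section

/-- The open unit disk in ℂ. -/
def unitDisk : Set ℂ := Metric.ball (0 : ℂ) 1

/-- `f` is normalized analytic on the unit disk: analytic there, `f 0 = 0`, `f' 0 = 1`. -/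
def IsNormalized (f : ℂ → ℂ) : Prop :=
  DifferentiableOn ℂ f unitDisk ∧ f 0 = 0 ∧ deriv f 0 = 1

/-- Uniformly starlike functions (two-variable characterization). -/
def IsUST (f : ℂ → ℂ) : Prop :=
  IsNormalized f ∧ Set.InjOn f unitDisk ∧
    ∀ z ∈ unitDisk, ∀ ζ ∈ unitDisk, z ≠ ζ →
      0 ≤ ((z - ζ) * deriv f z / (f z - f ζ)).re

/-- Uniformly convex functions (one-variable characterization). -/
def IsUCV (f : ℂ → ℂ) : Prop :=
  IsNormalized f ∧ Set.InjOn f unitDisk ∧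
    ∀ z ∈ unitDisk,
      ‖z * deriv (deriv f) z / deriv f z‖
        < (1 + z * deriv (deriv f) z / deriv f z).re

/-- Parabolic starlike functions. -/
def IsSP (f : ℂ → ℂ) : Prop :=
  IsNormalized f ∧
    ∀ z ∈ unitDisk, z ≠ 0 →
      ‖z * deriv f z / f z - 1‖ < (z * deriv f z / f z).re

/-- The `n`-th Taylor coefficient of `f` at the origin. -/
def taylorCoeff (f : ℂ → ℂ) (n : ℕ) : ℂ :=
  iteratedDeriv n f 0 / (n.factorial : ℂ)

open Filter Topology ComplexConjugate

/-!
Write `A = f'' / f'`. For fixed `z`, the supremum of `Re (ζ A(z))` over `ζ ∈ 𝔻` is `|A(z)|`, so the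
two-variable condition says `|A(z)| ≤ Re (1 + z A(z))`, which is stronger than the one-variable one.
Conversely, univalence makes `f'` zero-free, so `w ↦ 1 + (w - ζ) A(w)` is holomorphic on `𝔻`.
On a circle `|w| = ρ` with `|ζ| ≤ ρ < 1` its real part is at least `Re (1 + w A(w)) - |w A(w)| ≥ 0`,
and the minimum principle for the real part of a holomorphic function carries this inside.
-/

theorem Complex.le_re_of_forall_mem_frontier_le_re {E : Type*} [NormedAddCommGroup E]
    [NormedSpace ℂ E] [Nontrivial E] {g : E → ℂ} {U : Set E} (hU : Bornology.IsBounded U)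
    (hg : DiffContOnCl ℂ g U) {c : ℝ} (hc : ∀ z ∈ frontier U, c ≤ (g z).re) {z : E}
    (hz : z ∈ closure U) : c ≤ (g z).re := by
  have key : ∀ w, ‖exp (c - g w)‖ ≤ 1 ↔ c ≤ (g w).re := fun w => by simp [norm_exp]
  have hexp : DiffContOnCl ℂ (fun w => exp (c - g w)) U :=
    ⟨((differentiableOn_const _).sub hg.differentiableOn).cexp,
      (continuousOn_const.sub hg.continuousOn).cexp⟩
  exact (key z).1 <|
    norm_le_of_forall_mem_frontier_norm_le hU hexp (fun w hw => (key w).2 (hc w hw)) hz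

theorem AnalyticAt.exists_analyticAt_pow_eq {g : ℂ → ℂ} {z₀ : ℂ} (hg : AnalyticAt ℂ g z₀)
    (hg₀ : g z₀ ≠ 0) {n : ℕ} (hn : n ≠ 0) :
    ∃ h : ℂ → ℂ, AnalyticAt ℂ h z₀ ∧ ∀ z, h z ^ n = g z := by
  refine ⟨fun z => g z₀ ^ (n⁻¹ : ℂ) * (g z / g z₀) ^ (n⁻¹ : ℂ), ?_, fun z => ?_⟩
  · refine analyticAt_const.mul ((hg.div analyticAt_const hg₀).cpow analyticAt_const ?_)
    simp [hg₀]
  · rw [mul_pow, cpow_nat_inv_pow _ hn, cpow_nat_inv_pow _ hn, mul_div_cancel₀ _ hg₀]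

theorem AnalyticAt.exists_map_nhds_eq_and_eventuallyEq_pow {F : ℂ → ℂ} {z₀ : ℂ} {n : ℕ}
    (hF : AnalyticAt ℂ F z₀) (hn : analyticOrderAt F z₀ = n) (hn₀ : n ≠ 0) :
    ∃ φ : ℂ → ℂ, map φ (𝓝 z₀) = 𝓝 0 ∧ F =ᶠ[𝓝 z₀] fun z => φ z ^ n := by
  obtain ⟨g, hg, hg₀, hFg⟩ := hF.analyticOrderAt_eq_natCast.mp hn
  obtain ⟨h, hh, hhg⟩ := hg.exists_analyticAt_pow_eq hg₀ hn₀
  have hh₀ : h z₀ ≠ 0 := fun h0 => hg₀ (by rw [← hhg, h0, zero_pow hn₀])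
  have hφ : HasDerivAt (fun z => (z - z₀) * h z) (h z₀) z₀ := by
    simpa using ((hasDerivAt_id z₀).sub_const z₀).fun_mul hh.differentiableAt.hasDerivAt
  have hφa : AnalyticAt ℂ (fun z => (z - z₀) * h z) z₀ := by fun_prop
  refine ⟨fun z => (z - z₀) * h z, ?_, ?_⟩
  · simpa [hφ.deriv] using hφa.hasStrictDerivAt.map_nhds_eq (hφ.deriv ▸ hh₀)
  · filter_upwards [hFg] with z hz
    rw [hz, smul_eq_mul, mul_pow, hhg]

theorem Complex.not_injOn_pow_of_mem_nhds_zero {s : Set ℂ} (hs : s ∈ 𝓝 0) {n : ℕ}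
    (hn : 2 ≤ n) : ¬ InjOn (fun w => w ^ n) s := by
  intro hinj
  have hζ := isPrimitiveRoot_exp n (by omega)
  set ζ := exp (2 * Real.pi * I / n)
  have hζs : ∀ᶠ w in 𝓝 0, ζ * w ∈ s :=
    (continuous_const_mul ζ).continuousAt.preimage_mem_nhds (by simpa using hs)
  obtain ⟨w, ⟨hws, hζws⟩, hw₀⟩ := Filter.nonempty_of_mem <|
    inter_mem (mem_nhdsWithin_of_mem_nhds (inter_mem hs hζs)) (self_mem_nhdsWithin (s := {0}ᶜ))
  have hw : ζ * w = w := hinj hζws hws (by simp [mul_pow, hζ.pow_eq_one])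
  exact hζ.ne_one (by omega) (mul_right_cancel₀ hw₀ (by simpa using hw))

theorem AnalyticAt.deriv_ne_zero_of_injOn {f : ℂ → ℂ} {z₀ : ℂ} {s : Set ℂ}
    (hf : AnalyticAt ℂ f z₀) (hs : s ∈ 𝓝 z₀) (hinj : InjOn f s) : deriv f z₀ ≠ 0 := by
  intro hd
  set F := fun z => f z - f z₀
  have htop : analyticOrderAt F z₀ ≠ ⊤ := by
    rw [Ne, analyticOrderAt_eq_top]
    intro hev
    obtain ⟨z, ⟨hFz, hzs⟩, hz⟩ := Filter.nonempty_of_mem <|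
      inter_mem (mem_nhdsWithin_of_mem_nhds (inter_mem hev hs)) (self_mem_nhdsWithin (s := {z₀}ᶜ))
    exact hz (hinj hzs (mem_of_mem_nhds hs) (sub_eq_zero.mp hFz))
  have htwo : 2 ≤ analyticOrderAt F z₀ := by
    rw [← hf.analyticOrderAt_deriv_add_one]
    have : 1 ≤ analyticOrderAt (deriv f) z₀ :=
      Order.one_le_iff_ne_zero.mpr (hf.deriv.analyticOrderAt_ne_zero.mpr hd)
    calc (2 : ℕ∞) = 1 + 1 := by norm_num
      _ ≤ _ := by gcongr
  -- Near `z₀`, `F = φ ^ n` with `n ≥ 2` and `φ` open at `z₀`; but `w ↦ w ^ n` is not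
  -- injective near `0`.
  obtain ⟨n, hn⟩ := ENat.ne_top_iff_exists.mp htop
  have hn₂ : 2 ≤ n := by exact_mod_cast hn ▸ htwo
  obtain ⟨φ, hφ, hFφ⟩ :=
    (hf.sub analyticAt_const).exists_map_nhds_eq_and_eventuallyEq_pow hn.symm (by omega)
  have hs' : {z | z ∈ s ∧ F z = φ z ^ n} ∈ 𝓝 z₀ := inter_mem hs hFφ
  refine not_injOn_pow_of_mem_nhds_zero (hφ ▸ image_mem_map hs') hn₂ ?_
  rintro _ ⟨x, ⟨hxs, hx⟩, rfl⟩ _ ⟨y, ⟨hys, hy⟩, rfl⟩ hxy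
  have hxy' : f x = f y := by simpa [F, ← hx, ← hy] using hxy
  rw [hinj hxs hys hxy']

theorem Complex.norm_le_of_forall_re_mul_le {a : ℂ} {c : ℝ}
    (h : ∀ ζ ∈ ball (0 : ℂ) 1, (ζ * a).re ≤ c) : ‖a‖ ≤ c := by
  rcases eq_or_ne a 0 with rfl | ha
  · simpa using h 0 (mem_ball_self one_pos)
  have hlim : Tendsto (fun t : ℝ => t * ‖a‖) (𝓝[<] 1) (𝓝 ‖a‖) := by
    simpa using ((continuous_mul_const ‖a‖).tendsto 1).mono_left nhdsWithin_le_nhds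
  refine le_of_tendsto hlim ?_
  filter_upwards [Ioo_mem_nhdsLT one_pos] with t ht
  have hζa : t * (conj a / ‖a‖) * a = (t * ‖a‖ : ℝ) := by
    rw [mul_assoc, div_mul_eq_mul_div, conj_mul']
    push_cast
    field_simp
  have hζ : (t : ℂ) * (conj a / ‖a‖) ∈ ball (0 : ℂ) 1 := by
    simpa [norm_div, ha, abs_of_pos ht.1] using ht.2
  simpa [hζa] using h _ hζ

theorem norm_mul_lt_re_one_add_mul_of_forall {z a : ℂ} (hz : ‖z‖ < 1)
    (h : ∀ ζ ∈ ball (0 : ℂ) 1, 0 ≤ (1 + (z - ζ) * a).re) : ‖z * a‖ < (1 + z * a).re := by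
  have ha : ‖a‖ ≤ (1 + z * a).re := Complex.norm_le_of_forall_re_mul_le fun ζ hζ => by
    have := h ζ hζ
    simp only [sub_mul, add_re, sub_re] at this ⊢
    linarith
  rcases eq_or_ne a 0 with rfl | ha₀
  · simp
  · calc ‖z * a‖ = ‖z‖ * ‖a‖ := norm_mul z a
      _ < ‖a‖ := mul_lt_of_lt_one_left (norm_pos_iff.mpr ha₀) hz
      _ ≤ _ := ha

theorem re_one_add_sub_mul_nonneg_of_forall {A : ℂ → ℂ} (hA : DifferentiableOn ℂ A (ball 0 1))
    (h : ∀ w ∈ ball (0 : ℂ) 1, ‖w * A w‖ ≤ (1 + w * A w).re) {z ζ : ℂ}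
    (hz : z ∈ ball (0 : ℂ) 1) (hζ : ζ ∈ ball (0 : ℂ) 1) : 0 ≤ (1 + (z - ζ) * A z).re := by
  rw [mem_ball_zero_iff] at hz hζ
  obtain ⟨ρ, hρ, hρ₁⟩ := exists_between (max_lt hz hζ)
  have hρ₀ : 0 < ρ := (norm_nonneg z).trans_lt ((le_max_left _ _).trans_lt hρ)
  have hζρ : ‖ζ‖ ≤ ρ := (le_max_right _ _).trans hρ.le
  have hg : DifferentiableOn ℂ (fun w => 1 + (w - ζ) * A w) (ball 0 1) := by fun_prop
  refine Complex.le_re_of_forall_mem_frontier_le_re (g := fun w => 1 + (w - ζ) * A w)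
    (U := ball 0 ρ) isBounded_ball ((hg.mono ?_).diffContOnCl) (fun w hw => ?_) ?_
  · rw [closure_ball _ hρ₀.ne']
    exact closedBall_subset_ball hρ₁
  · rw [frontier_ball _ hρ₀.ne', mem_sphere_zero_iff_norm] at hw
    have hwA := h w (mem_ball_zero_iff.mpr (hw ▸ hρ₁))
    have hζA : (ζ * A w).re ≤ ρ * ‖A w‖ := (re_le_norm _).trans <| by
      rw [norm_mul]; gcongr
    rw [norm_mul, hw] at hwA
    simp only [sub_mul, add_re, sub_re] at hwA ⊢
    linarith
  · rw [closure_ball _ hρ₀.ne', mem_closedBall_zero_iff]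
    exact (le_max_left _ _).trans hρ.le

/-- the two-variable and one-variable analytic characterizations of
uniformly convex functions agree. -/
theorem ucv_two_variable_iff_one_variable (f : ℂ → ℂ) (hf : IsNormalized f)
    (hinj : Set.InjOn f unitDisk) :
    (∀ z ∈ unitDisk, ∀ ζ ∈ unitDisk,
        0 ≤ (1 + (z - ζ) * deriv (deriv f) z / deriv f z).re) ↔
    (∀ z ∈ unitDisk,
        ‖z * deriv (deriv f) z / deriv f z‖
          < (1 + z * deriv (deriv f) z / deriv f z).re) := by
  have hf' : DifferentiableOn ℂ (deriv f) unitDisk := hf.1.deriv isOpen_ball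
  have hA : DifferentiableOn ℂ (fun w => deriv (deriv f) w / deriv f w) unitDisk :=
    (hf'.deriv isOpen_ball).div hf' fun w hw =>
      (hf.1.analyticAt (isOpen_ball.mem_nhds hw)).deriv_ne_zero_of_injOn
        (isOpen_ball.mem_nhds hw) hinj
  simp only [mul_div_assoc]
  constructor
  · exact fun h z hz => norm_mul_lt_re_one_add_mul_of_forall (mem_ball_zero_iff.mp hz) (h z hz)
  · exact fun h z hz ζ hζ => re_one_add_sub_mul_nonneg_of_forall hA (fun w hw => (h w hw).le) hz hζ
end
end

section
/- Let A ∈ ℂ with |A| < 1 and let F₁(z) = z/(1 − Az). Then F₁ ∈ UST if and only if |A| ≤ 1/√2. -/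
/-!
For `f z = z / (1 - A z)` one computes `(z - ζ) f'(z) / (f z - f ζ) = (1 - A ζ) / (1 - A z)`, so the
condition only involves `u = A z` and `v = A ζ`, which range over the disk of radius `‖A‖`.
If `‖w‖ ≤ 1/√2`, then `1 - w` lies in the sector `|arg| ≤ π/4` (the tangents from `1` to the circle
of radius `1/√2` meet it at angle `π/4`); the quotient of two points of that sector has
`|arg| ≤ π/2`, hence nonnegative real part. Conversely, for `w = s (1 + i)` with `s > 1/2` the
quotient `(1 - w) / (1 - w̄)` has real part of the sign of `Re (1 - w)² = 1 - 2s < 0`.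
-/

open Complex Metric Set

noncomputable section

open ComplexConjugate

namespace Complex

theorem re_div_eq_re_mul_conj_div_normSq (a b : ℂ) :
    (a / b).re = (a * conj b).re / normSq b := by
  simp only [div_re, mul_re, conj_re, conj_im]
  ring

theorem abs_im_le_re_one_sub {w : ℂ} (hw : ‖w‖ ≤ 1 / Real.sqrt 2) :
    |(1 - w).im| ≤ (1 - w).re := by
  have hsq : w.re ^ 2 + w.im ^ 2 ≤ 1 / 2 := by
    have := pow_le_pow_left₀ (norm_nonneg w) hw 2
    rwa [← normSq_eq_norm_sq, normSq_apply, div_pow, Real.sq_sqrt zero_le_two, one_pow,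
      ← sq, ← sq] at this
  simp only [sub_re, sub_im, one_re, one_im, zero_sub, abs_neg]
  exact abs_le_of_sq_le_sq (by nlinarith [sq_nonneg (w.re - 1 / 2)]) (by nlinarith [sq_nonneg w.im])

theorem re_mul_conj_nonneg_of_abs_im_le_re {a b : ℂ} (ha : |a.im| ≤ a.re) (hb : |b.im| ≤ b.re) :
    0 ≤ (a * conj b).re := by
  have hab : |a.im * b.im| ≤ a.re * b.re := by
    rw [abs_mul]
    exact mul_le_mul ha hb (abs_nonneg _) ((abs_nonneg _).trans ha)
  simp only [mul_re, conj_re, conj_im, mul_neg, sub_neg_eq_add]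
  linarith [neg_abs_le (a.im * b.im)]

theorem re_div_one_sub_nonneg {u v : ℂ} (hu : ‖u‖ ≤ 1 / Real.sqrt 2)
    (hv : ‖v‖ ≤ 1 / Real.sqrt 2) : 0 ≤ ((1 - v) / (1 - u)).re := by
  rw [re_div_eq_re_mul_conj_div_normSq]
  exact div_nonneg
    (re_mul_conj_nonneg_of_abs_im_le_re (abs_im_le_re_one_sub hv) (abs_im_le_re_one_sub hu))
    (normSq_nonneg _)

theorem exists_re_div_one_sub_conj_neg {r : ℝ} (hr : 1 / Real.sqrt 2 < r) :
    ∃ w : ℂ, ‖w‖ < r ∧ conj w ≠ w ∧ ((1 - w) / (1 - conj w)).re < 0 := by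
  have hs2 : 0 < Real.sqrt 2 := by positivity
  obtain ⟨s, hs, hsr⟩ : ∃ s : ℝ, 1 / 2 < s ∧ s < r / Real.sqrt 2 := by
    refine exists_between ?_
    rw [lt_div_iff₀ hs2]
    calc 1 / 2 * Real.sqrt 2 = 1 / Real.sqrt 2 := by field_simp; simp
      _ < r := hr
  set w : ℂ := s * (1 + I)
  have hre : w.re = s := by simp [w]
  have him : w.im = s := by simp [w]
  refine ⟨w, ?_, fun h => ?_, ?_⟩
  · have hnorm : ‖(1 : ℂ) + I‖ = Real.sqrt 2 := by
      rw [norm_def, normSq_apply]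
      norm_num
    rw [norm_mul, hnorm, norm_real, Real.norm_of_nonneg (by linarith)]
    exact (lt_div_iff₀ hs2).1 hsr
  · have := congrArg im h
    rw [conj_im, him] at this
    linarith
  · -- the denominator's conjugate is `1 - w` again, so the sign is that of `Re (1 - w)² = 1 - 2s`
    rw [re_div_eq_re_mul_conj_div_normSq]
    apply div_neg_of_neg_of_pos
    · simp only [mul_re, sub_re, sub_im, one_re, one_im, conj_re, conj_im, hre, him]
      nlinarith
    · refine normSq_pos.2 fun h => ?_
      have := congrArg im h
      simp only [sub_im, one_im, conj_im, him, zero_im] at this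
      linarith

end Complex

def linFrac (A z : ℂ) : ℂ := z / (1 - A * z)

section LinFrac

variable {A z ζ : ℂ}

theorem norm_mul_le_of_mem_unitDisk (hz : z ∈ unitDisk) : ‖A * z‖ ≤ ‖A‖ := by
  rw [norm_mul]
  exact mul_le_of_le_one_right (norm_nonneg A) (mem_ball_zero_iff.1 hz).le

theorem one_sub_mul_ne_zero_of_mem_unitDisk (hA : ‖A‖ < 1) (hz : z ∈ unitDisk) :
    1 - A * z ≠ 0 := by
  intro h
  have := (norm_mul_le_of_mem_unitDisk hz).trans_lt hA
  rw [← sub_eq_zero.1 h, norm_one] at this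
  exact lt_irrefl 1 this

theorem hasDerivAt_linFrac (h : 1 - A * z ≠ 0) :
    HasDerivAt (linFrac A) (1 / (1 - A * z) ^ 2) z := by
  have hden : HasDerivAt (fun w : ℂ => 1 - A * w) (-A) z := by
    simpa using ((hasDerivAt_id z).const_mul A).const_sub 1
  exact ((hasDerivAt_id' z).div hden h).congr_deriv (by ring)

theorem linFrac_sub_linFrac (hz : 1 - A * z ≠ 0) (hζ : 1 - A * ζ ≠ 0) :
    linFrac A z - linFrac A ζ = (z - ζ) / ((1 - A * z) * (1 - A * ζ)) := by
  rw [linFrac, linFrac, div_sub_div _ _ hz hζ]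
  ring

theorem linFrac_difference_quotient (hz : 1 - A * z ≠ 0) (hζ : 1 - A * ζ ≠ 0) (hne : z ≠ ζ) :
    (z - ζ) * deriv (linFrac A) z / (linFrac A z - linFrac A ζ) = (1 - A * ζ) / (1 - A * z) := by
  rw [(hasDerivAt_linFrac hz).deriv, linFrac_sub_linFrac hz hζ]
  have : z - ζ ≠ 0 := sub_ne_zero.2 hne
  field_simp

theorem isNormalized_linFrac (hA : ‖A‖ < 1) : IsNormalized (linFrac A) := by
  refine ⟨fun z hz => ?_, by simp [linFrac], ?_⟩
  · exact (hasDerivAt_linFrac (one_sub_mul_ne_zero_of_mem_unitDisk hA hz)).differentiableAt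
      |>.differentiableWithinAt
  · simp [(hasDerivAt_linFrac (by simp : 1 - A * 0 ≠ 0)).deriv]

theorem injOn_linFrac (hA : ‖A‖ < 1) : InjOn (linFrac A) unitDisk := by
  intro z hz ζ hζ h
  rw [linFrac, linFrac, div_eq_div_iff (one_sub_mul_ne_zero_of_mem_unitDisk hA hz)
    (one_sub_mul_ne_zero_of_mem_unitDisk hA hζ)] at h
  linear_combination h

end LinFrac

/-- z/(1 - Az) is uniformly starlike iff |A| ≤ 1/√2. -/
theorem ust_linear_fractional_iff (A : ℂ) (hA : ‖A‖ < 1) :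
    IsUST (fun z => z / (1 - A * z)) ↔ ‖A‖ ≤ 1 / Real.sqrt 2 := by
  change IsUST (linFrac A) ↔ _
  have hden {z} (hz : z ∈ unitDisk) := one_sub_mul_ne_zero_of_mem_unitDisk hA hz
  refine ⟨fun ⟨_, _, hUST⟩ => ?_, fun hAle => ⟨isNormalized_linFrac hA, injOn_linFrac hA, ?_⟩⟩
  · by_contra! hlarge
    obtain ⟨w, hw, hconj, hneg⟩ := exists_re_div_one_sub_conj_neg hlarge
    have hA0 : A ≠ 0 := norm_pos_iff.1 ((by positivity : (0 : ℝ) < 1 / Real.sqrt 2).trans hlarge)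
    have hmem {u : ℂ} (hu : ‖u‖ < ‖A‖) : u / A ∈ unitDisk := by
      rwa [unitDisk, mem_ball_zero_iff, norm_div, div_lt_one (norm_pos_iff.2 hA0)]
    have hz := hmem (u := conj w) (by rwa [norm_conj])
    have hζ := hmem hw
    have hne : conj w / A ≠ w / A := fun h => hconj ((div_left_inj' hA0).1 h)
    have := hUST _ hz _ hζ hne
    rw [linFrac_difference_quotient (hden hz) (hden hζ) hne, mul_div_cancel₀ _ hA0,
      mul_div_cancel₀ _ hA0] at this
    linarith
  · intro z hz ζ hζ hne
    rw [linFrac_difference_quotient (hden hz) (hden hζ) hne]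
    exact re_div_one_sub_nonneg ((norm_mul_le_of_mem_unitDisk hz).trans hAle)
      ((norm_mul_le_of_mem_unitDisk hζ).trans hAle)
end
end

section
/- Let n ≥ 2 be an integer and A ∈ ℂ with |A| ≤ √((n+1)/(2n³)). Then the function F₂(z) = z + A·zⁿ belongs to UST. -/
open Complex Metric Set

noncomputable section

/-!
For `F(z) = z + A zⁿ` one has `F(z) - F(ζ) = (z - ζ)(1 + A Q(z, ζ))` with
`Q(z, ζ) = ∑_{i<n} z^i ζ^(n-1-i)` and `F'(z) = 1 + A P(z)`, `P(z) = n z^(n-1)`. The real part of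
`(1 + A P)/(1 + A Q)` is nonnegative as soon as `‖A‖ (‖P - Q‖ + ‖P + Q‖) ≤ 2`, so everything
rests on the bound `‖P - Q‖ + ‖P + Q‖ ≤ 2 √(2n³/(n+1))` on the closed bidisk. By the maximum
principle in each variable it suffices to prove it on the torus, and by homogeneity for `ζ = z̄`,
`z = e^{iθ}`. Then `Q = sin nθ / sin θ` is real and the bound says that `P = n e^{i(n-1)θ}` lies in
the ellipse with foci `±Q` and major semi-axis `√(2n³/(n+1))`; with `sin nθ = sin (n-1)θ cos θ +
cos (n-1)θ sin θ` and `|sin (n-1)θ| ≤ (n-1) |sin θ|` this becomes a polynomial inequality in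
`sin² (n-1)θ`.
-/

open ComplexConjugate

section GeomSum₂

variable {R : Type*} [CommRing R]

def geomSum₂ (n : ℕ) (x y : R) : R := ∑ i ∈ Finset.range n, x ^ i * y ^ (n - 1 - i)

variable (n : ℕ) (x y : R)

theorem geomSum₂_mul_sub : geomSum₂ n x y * (x - y) = x ^ n - y ^ n := geom_sum₂_mul x y n

theorem geomSum₂_comm : geomSum₂ n x y = geomSum₂ n y x := geom_sum₂_comm x y n

theorem geomSum₂_mul_mul (c : R) :
    geomSum₂ n (c * x) (c * y) = c ^ (n - 1) * geomSum₂ n x y := by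
  simp only [geomSum₂, Finset.mul_sum]
  refine Finset.sum_congr rfl fun i hi => ?_
  have hi : i + (n - 1 - i) = n - 1 := by have := Finset.mem_range.1 hi; omega
  rw [mul_pow, mul_pow, mul_mul_mul_comm, ← pow_add, hi]

theorem map_geomSum₂ {S : Type*} [CommRing S] (f : R →+* S) :
    f (geomSum₂ n x y) = geomSum₂ n (f x) (f y) :=
  RingHom.map_geom_sum₂ x y n f

theorem norm_geomSum₂_le {𝕜 : Type*} [NormedField 𝕜] {x y : 𝕜} (hx : ‖x‖ ≤ 1) (hy : ‖y‖ ≤ 1) :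
    ‖geomSum₂ n x y‖ ≤ n :=
  calc ‖geomSum₂ n x y‖ ≤ ∑ i ∈ Finset.range n, ‖x ^ i * y ^ (n - 1 - i)‖ := norm_sum_le _ _
    _ ≤ ∑ _i ∈ Finset.range n, (1 : ℝ) := Finset.sum_le_sum fun i _ => by
        rw [norm_mul, norm_pow, norm_pow]
        exact mul_le_one₀ (pow_le_one₀ (norm_nonneg _) hx) (by positivity)
          (pow_le_one₀ (norm_nonneg _) hy)
    _ = n := by simp

end GeomSum₂

-- A concave quadratic in `u` whose vertex lies to the right of `u = 1` exactly when `m ≥ 2`.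
theorem sq_add_one_sub_two_mul_mul_le {m u : ℝ} (hm : 1 ≤ m) (hu1 : u ≤ 1) :
    (m + 2) * (m ^ 2 + 1 - 2 * u) * ((m + 2) * u + m) ≤ 2 * (m + 1) ^ 3 * m := by
  have hm1 := sub_nonneg.2 hm
  rcases le_total m 2 with hm2 | hm2
  · have hm2 := sub_nonneg.2 hm2
    have hdisc : 0 ≤ -m ^ 6 - 4 * m ^ 5 + 6 * m ^ 4 + 32 * m ^ 3 + 31 * m ^ 2 + 4 * m - 4 := by
      nlinarith [mul_nonneg hm1 hm2, sq_nonneg (m - 1), sq_nonneg (m - 2),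
        mul_nonneg (mul_nonneg hm1 hm1) hm2, mul_nonneg (mul_nonneg hm2 hm2) hm1]
    nlinarith [sq_nonneg (4 * (m + 2) ^ 2 * u - (m + 2) * (m ^ 3 + 2 * m ^ 2 - m + 2)),
      mul_nonneg (sq_nonneg (m + 2)) hdisc]
  · have hm2' : 0 ≤ (m + 2) * (m - 2) * (m ^ 2 + 4 * m + 3) := by
      have := sub_nonneg.2 hm2
      positivity
    nlinarith [mul_nonneg (sub_nonneg.2 hu1) hm2',
      mul_nonneg (sq_nonneg (1 - u)) (sq_nonneg (m + 2)), sq_nonneg (m + 1)]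

theorem sq_sqrt_add_sqrt_mul_le {m u : ℝ} (hm : 1 ≤ m) (hu0 : 0 ≤ u) (hu1 : u ≤ 1) :
    (√(m ^ 2 - u) + √(1 - u)) ^ 2 * ((m + 2) * u + m) * (m + 2) ≤ 2 * (m + 1) ^ 3 * m := by
  have hg : √(m ^ 2 - u) ^ 2 = m ^ 2 - u := Real.sq_sqrt (by nlinarith)
  have hy : √(1 - u) ^ 2 = 1 - u := Real.sq_sqrt (by linarith)
  set w := √(m ^ 2 - u) * √(1 - u)
  have hw : 0 ≤ w := by positivity
  have hw2 : w ^ 2 = (m ^ 2 - u) * (1 - u) := by rw [mul_pow, hg, hy]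
  have hsq : (√(m ^ 2 - u) + √(1 - u)) ^ 2 = m ^ 2 + 1 - 2 * u + 2 * w := by
    linear_combination hg + hy
  set L := (m + 2) * u + m
  have hL : 0 < L := by positivity
  set Rm := 2 * (m + 1) ^ 3 * m - (m + 2) * (m ^ 2 + 1 - 2 * u) * L
  have hRm : 0 ≤ Rm := sub_nonneg.2 (sq_add_one_sub_two_mul_mul_le hm hu1)
  set c2 := m ^ 8 + 8 * m ^ 7 + 30 * m ^ 6 + 72 * m ^ 5 + 121 * m ^ 4 + 144 * m ^ 3 + 120 * m ^ 2
    + 64 * m + 16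
  have hc2 : 0 < c2 := by positivity
  set c1 := -(m ^ 2 * (m ^ 6 + 8 * m ^ 5 + 26 * m ^ 4 + 48 * m ^ 3 + 57 * m ^ 2 + 40 * m + 12))
  -- `Rm ^ 2 - (2 (m + 2) w L) ^ 2` is a perfect square up to the positive factor `c2`.
  have key : c2 * (Rm ^ 2 - (2 * (m + 2) * w * L) ^ 2) = (c2 * u + c1) ^ 2 := by
    linear_combination (-4 * c2 * (m + 2) ^ 2 * L ^ 2) * hw2
  have hB : 2 * (m + 2) * w * L ≤ Rm :=
    (pow_le_pow_iff_left₀ (by positivity) hRm two_ne_zero).1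
      (by nlinarith [sq_nonneg (c2 * u + c1)])
  rw [hsq]
  linear_combination hB

theorem abs_le_sqrt_add_sqrt_of_mul_eq {m a b c s d : ℝ} (hab : a ^ 2 + b ^ 2 = 1)
    (hcs : c ^ 2 + s ^ 2 = 1) (hb : |b| ≤ m * |s|) (hd : |d| ≤ m + 1)
    (hds : d * s = a * s + b * c) : |d| ≤ √(m ^ 2 - b ^ 2) + √(1 - b ^ 2) := by
  have hy : √(1 - b ^ 2) = |a| := by rw [← hab, add_sub_cancel_right, Real.sqrt_sq_eq_abs]
  rcases eq_or_ne s 0 with rfl | hs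
  · have hb0 : b = 0 := abs_nonpos_iff.1 (by simpa using hb)
    have ha : |a| = 1 := by
      rw [← hy, hb0]
      norm_num
    rw [hy, ha, hb0, zero_pow two_ne_zero, sub_zero, Real.sqrt_sq_eq_abs]
    linarith [le_abs_self m]
  · have hb2 : b ^ 2 ≤ m ^ 2 * s ^ 2 := by
      simpa [mul_pow] using pow_le_pow_left₀ (abs_nonneg b) hb 2
    have hbc : |b| * |c| ≤ |s| * √(m ^ 2 - b ^ 2) := by
      have hmb : 0 ≤ m ^ 2 - b ^ 2 := by nlinarith
      refine (pow_le_pow_iff_left₀ (by positivity) (by positivity) two_ne_zero).1 ?_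
      rw [mul_pow, mul_pow, sq_abs, sq_abs, sq_abs, Real.sq_sqrt hmb]
      nlinarith
    have hds' : |d| * |s| ≤ (√(m ^ 2 - b ^ 2) + √(1 - b ^ 2)) * |s| :=
      calc |d| * |s| = |a * s + b * c| := by rw [← hds, abs_mul]
        _ ≤ |a| * |s| + |b| * |c| := by rw [← abs_mul, ← abs_mul]; exact abs_add_le _ _
        _ ≤ _ := by rw [hy]; linarith
    exact le_of_mul_le_mul_right hds' (abs_pos.2 hs)

theorem Complex.abs_im_pow_le {u : ℂ} (hu : ‖u‖ ≤ 1) (k : ℕ) : |(u ^ k).im| ≤ k * |u.im| := by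
  induction k with
  | zero => simp
  | succ k ih =>
    have hre : |(u ^ k).re| ≤ 1 :=
      (abs_re_le_norm _).trans (by rw [norm_pow]; exact pow_le_one₀ (norm_nonneg _) hu)
    have hre' : |u.re| ≤ 1 := (abs_re_le_norm u).trans hu
    calc |(u ^ (k + 1)).im| = |(u ^ k).re * u.im + (u ^ k).im * u.re| := by rw [pow_succ, mul_im]
      _ ≤ |(u ^ k).re| * |u.im| + |(u ^ k).im| * |u.re| := by
        rw [← abs_mul, ← abs_mul]; exact abs_add_le _ _
      _ ≤ 1 * |u.im| + k * |u.im| * 1 := by gcongr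
      _ = (k + 1 : ℕ) * |u.im| := by push_cast; ring

theorem Complex.norm_sub_add_norm_add_le_of_ellipse {X : ℂ} {d K : ℝ} (hK : 0 < K)
    (hx : X.re ^ 2 ≤ K) (hd : d ^ 2 ≤ K) (h : K * X.im ^ 2 ≤ (K - d ^ 2) * (K - X.re ^ 2)) :
    ‖X - d‖ + ‖X + d‖ ≤ 2 * √K := by
  have hp : ‖X - d‖ ^ 2 = (X.re - d) ^ 2 + X.im ^ 2 := by
    rw [Complex.sq_norm, normSq_apply]
    simp only [sub_re, sub_im, ofReal_re, ofReal_im, sub_zero]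
    ring
  have hq : ‖X + d‖ ^ 2 = (X.re + d) ^ 2 + X.im ^ 2 := by
    rw [Complex.sq_norm, normSq_apply]
    simp only [add_re, add_im, ofReal_re, ofReal_im, add_zero]
    ring
  set S := X.re ^ 2 + X.im ^ 2 + d ^ 2
  have hS : S ≤ 2 * K := by
    have : K * S ≤ K * (2 * K) := by nlinarith [mul_le_mul hx hd (sq_nonneg d) hK.le]
    exact le_of_mul_le_mul_left this hK
  have hpq : ‖X - d‖ * ‖X + d‖ ≤ 2 * K - S := by
    refine (pow_le_pow_iff_left₀ (by positivity) (by linarith) two_ne_zero).1 ?_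
    rw [mul_pow, hp, hq]
    nlinarith
  refine (pow_le_pow_iff_left₀ (by positivity) (by positivity) two_ne_zero).1 ?_
  rw [mul_pow, Real.sq_sqrt hK.le]
  nlinarith

theorem Complex.re_div_nonneg_of_norm_sub_le_norm_add {w v : ℂ} (h : ‖w - v‖ ≤ ‖w + v‖) :
    0 ≤ (w / v).re := by
  have h2 : normSq (w - v) ≤ normSq (w + v) := by
    rw [← Complex.sq_norm, ← Complex.sq_norm]
    gcongr
  rw [div_re, ← add_div]
  refine div_nonneg ?_ (normSq_nonneg v)
  simp only [normSq_apply, add_re, add_im, sub_re, sub_im] at h2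
  nlinarith

theorem Complex.re_one_add_mul_div_one_add_mul_nonneg {A p q : ℂ}
    (h : ‖A‖ * (‖p - q‖ + ‖p + q‖) ≤ 2) : 0 ≤ ((1 + A * p) / (1 + A * q)).re := by
  apply re_div_nonneg_of_norm_sub_le_norm_add
  rw [show 1 + A * p - (1 + A * q) = A * (p - q) by ring,
    show 1 + A * p + (1 + A * q) = 2 - -(A * (p + q)) by ring, norm_mul]
  calc ‖A‖ * ‖p - q‖ ≤ ‖(2 : ℂ)‖ - ‖-(A * (p + q))‖ := by
        rw [norm_neg, norm_mul, Complex.norm_two]; linarith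
    _ ≤ _ := norm_sub_norm_le _ _

theorem Complex.exists_norm_eq_one_mul_eq_norm (w : ℂ) : ∃ α : ℂ, ‖α‖ = 1 ∧ α * w = ‖w‖ := by
  refine ⟨exp (↑(-arg w) * I), norm_exp_ofReal_mul_I _, ?_⟩
  calc exp (↑(-arg w) * I) * w = exp (↑(-arg w) * I) * (‖w‖ * exp (arg w * I)) := by
        rw [norm_mul_exp_arg_mul_I]
    _ = ‖w‖ := by
        rw [mul_left_comm, ← exp_add, ofReal_neg, neg_mul, neg_add_cancel, exp_zero, mul_one]

theorem Complex.norm_add_norm_le_of_forall_mem_frontier {f g : ℂ → ℂ} {U : Set ℂ}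
    (hU : Bornology.IsBounded U) (hf : DiffContOnCl ℂ f U) (hg : DiffContOnCl ℂ g U) {C : ℝ}
    (hC : ∀ z ∈ frontier U, ‖f z‖ + ‖g z‖ ≤ C) {z : ℂ} (hz : z ∈ closure U) :
    ‖f z‖ + ‖g z‖ ≤ C := by
  obtain ⟨α, hα, hαf⟩ := exists_norm_eq_one_mul_eq_norm (f z)
  obtain ⟨β, hβ, hβg⟩ := exists_norm_eq_one_mul_eq_norm (g z)
  have hmax := norm_le_of_forall_mem_frontier_norm_le (f := fun u => α * f u + β * g u) (C := C) hU
    ((hf.const_smul α).add (hg.const_smul β)) (fun u hu => ?_) hz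
  · rwa [hαf, hβg, ← ofReal_add, norm_real, Real.norm_of_nonneg (by positivity)] at hmax
  · calc ‖α * f u + β * g u‖ ≤ ‖α * f u‖ + ‖β * g u‖ := norm_add_le _ _
      _ = ‖f u‖ + ‖g u‖ := by rw [norm_mul, norm_mul, hα, hβ, one_mul, one_mul]
      _ ≤ C := hC u hu

theorem Complex.norm_add_norm_le_of_forall_norm_eq_one {f g : ℂ → ℂ} (hf : Differentiable ℂ f)
    (hg : Differentiable ℂ g) {C : ℝ} (hC : ∀ u : ℂ, ‖u‖ = 1 → ‖f u‖ + ‖g u‖ ≤ C) {z : ℂ}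
    (hz : ‖z‖ ≤ 1) : ‖f z‖ + ‖g z‖ ≤ C :=
  norm_add_norm_le_of_forall_mem_frontier (U := ball 0 1) isBounded_ball hf.diffContOnCl
    hg.diffContOnCl
    (fun u hu => hC u (by simpa [frontier_ball (0 : ℂ) one_ne_zero] using hu))
    (by rwa [closure_ball (0 : ℂ) one_ne_zero, mem_closedBall_zero_iff])

theorem Complex.re_sq_add_im_sq_eq_one {z : ℂ} (hz : ‖z‖ = 1) : z.re ^ 2 + z.im ^ 2 = 1 := by
  have h := Complex.sq_norm z
  rw [hz, normSq_apply] at h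
  linear_combination -h

-- In the application `c + i s = e^{iθ}`, `a + i b = e^{i(n-1)θ}` and `d = sin nθ / sin θ`.
theorem ellipse_ineq_of_mul_eq {n a b c s d : ℝ} (hn : 2 ≤ n) (hab : a ^ 2 + b ^ 2 = 1)
    (hcs : c ^ 2 + s ^ 2 = 1) (hb : |b| ≤ (n - 1) * |s|) (hd : |d| ≤ n)
    (hds : d * s = a * s + b * c) :
    2 * n ^ 3 / (n + 1) * (n * b) ^ 2 ≤
      (2 * n ^ 3 / (n + 1) - d ^ 2) * (2 * n ^ 3 / (n + 1) - (n * a) ^ 2) := by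
  have hdg := abs_le_sqrt_add_sqrt_of_mul_eq hab hcs hb (by linarith) hds
  have hd2 : d ^ 2 ≤ (√((n - 1) ^ 2 - b ^ 2) + √(1 - b ^ 2)) ^ 2 := by
    simpa using pow_le_pow_left₀ (abs_nonneg d) hdg 2
  have hg := sq_sqrt_add_sqrt_mul_le (m := n - 1) (u := b ^ 2) (by linarith) (sq_nonneg b)
    (by nlinarith)
  have key : d ^ 2 * ((n + 1) * b ^ 2 + n - 1) * (n + 1) ≤ 2 * n ^ 3 * (n - 1) := by
    have hpos : 0 ≤ ((n + 1) * b ^ 2 + n - 1) * (n + 1) := by nlinarith [sq_nonneg b]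
    calc d ^ 2 * ((n + 1) * b ^ 2 + n - 1) * (n + 1)
        ≤ (√((n - 1) ^ 2 - b ^ 2) + √(1 - b ^ 2)) ^ 2 * ((n + 1) * b ^ 2 + n - 1) * (n + 1) := by
          rw [mul_assoc, mul_assoc]; exact mul_le_mul_of_nonneg_right hd2 hpos
      _ ≤ 2 * n ^ 3 * (n - 1) := by convert hg using 2 <;> ring
  have hn1 : 0 < n + 1 := by linarith
  rw [div_mul_eq_mul_div, div_sub' hn1.ne', div_sub' hn1.ne', div_mul_div_comm,
    div_le_div_iff₀ hn1 (by positivity), mul_pow n a, show a ^ 2 = 1 - b ^ 2 by linarith]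
  nlinarith [mul_le_mul_of_nonneg_left key (by positivity : (0 : ℝ) ≤ (n + 1) * n ^ 2)]

theorem norm_sub_add_norm_add_geomSum₂_conj_le {n : ℕ} (hn : 2 ≤ n) {u : ℂ} (hu : ‖u‖ = 1) :
    ‖n * u ^ (n - 1) - geomSum₂ n u (conj u)‖ + ‖n * u ^ (n - 1) + geomSum₂ n u (conj u)‖ ≤
      2 * √(2 * n ^ 3 / (n + 1)) := by
  have hn' : (2 : ℝ) ≤ n := by exact_mod_cast hn
  set d := (geomSum₂ n u (conj u)).re
  have hreal : geomSum₂ n u (conj u) = d :=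
    (conj_eq_iff_re.1 (by rw [map_geomSum₂, conj_conj, geomSum₂_comm])).symm
  have hb : |(u ^ (n - 1)).im| ≤ (n - 1 : ℝ) * |u.im| := by
    simpa [Nat.cast_sub (by omega : 1 ≤ n)] using abs_im_pow_le hu.le (n - 1)
  have hd : |d| ≤ n := by
    have h := norm_geomSum₂_le n hu.le (by rw [norm_conj, hu])
    rwa [hreal, norm_real, Real.norm_eq_abs] at h
  have hds : d * u.im = (u ^ (n - 1)).re * u.im + (u ^ (n - 1)).im * u.re := by
    have h := congrArg im (geomSum₂_mul_sub n u (conj u))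
    have hun : u ^ n = u ^ (n - 1) * u := by rw [← pow_succ, Nat.sub_add_cancel (by omega)]
    rw [hreal, sub_conj, ← map_pow, sub_conj, hun] at h
    simp only [mul_im, mul_re, ofReal_re, ofReal_im, I_re, I_im] at h
    linarith
  have hab := re_sq_add_im_sq_eq_one (z := u ^ (n - 1)) (by rw [norm_pow, hu, one_pow])
  have hK := ellipse_ineq_of_mul_eq hn' hab (re_sq_add_im_sq_eq_one hu) hb hd hds
  have hnK : (n : ℝ) ^ 2 ≤ 2 * n ^ 3 / (n + 1) := by
    rw [le_div_iff₀ (by positivity)]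
    nlinarith
  have hre : ((n : ℂ) * u ^ (n - 1)).re = n * (u ^ (n - 1)).re := by simp
  have him : ((n : ℂ) * u ^ (n - 1)).im = n * (u ^ (n - 1)).im := by simp
  rw [hreal]
  refine norm_sub_add_norm_add_le_of_ellipse (by positivity) ?_ ?_ (by rwa [hre, him])
  · rw [hre, mul_pow]
    nlinarith [sq_nonneg (u ^ (n - 1)).im]
  · nlinarith [sq_abs d, pow_le_pow_left₀ (abs_nonneg d) hd 2]

theorem norm_sub_add_norm_add_geomSum₂_le_of_norm_eq_one {n : ℕ} (hn : 2 ≤ n) {z ζ : ℂ}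
    (hz : ‖z‖ = 1) (hζ : ‖ζ‖ = 1) :
    ‖n * z ^ (n - 1) - geomSum₂ n z ζ‖ + ‖n * z ^ (n - 1) + geomSum₂ n z ζ‖ ≤
      2 * √(2 * n ^ 3 / (n + 1)) := by
  obtain ⟨l, hl⟩ := IsAlgClosed.exists_pow_nat_eq (z * ζ) two_pos
  have hl1 : ‖l‖ = 1 := (pow_eq_one_iff_of_nonneg (norm_nonneg l) two_ne_zero).1 <| by
    rw [← norm_pow, hl, norm_mul, hz, hζ, one_mul]
  have hl0 : l ≠ 0 := norm_ne_zero_iff.1 (by rw [hl1]; exact one_ne_zero)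
  have hz0 : z ≠ 0 := norm_ne_zero_iff.1 (by rw [hz]; exact one_ne_zero)
  set u := z / l
  have hu : ‖u‖ = 1 := by rw [norm_div, hz, hl1, div_one]
  have hz' : z = l * u := (mul_div_cancel₀ z hl0).symm
  have hζ' : ζ = l * conj u := by
    rw [← inv_eq_conj hu, inv_div, mul_div_assoc', ← sq, hl, mul_div_cancel_left₀ ζ hz0]
  have hP : (n : ℂ) * z ^ (n - 1) = l ^ (n - 1) * (n * u ^ (n - 1)) := by
    rw [hz', mul_pow]; ring
  have hQ : geomSum₂ n z ζ = l ^ (n - 1) * geomSum₂ n u (conj u) := by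
    rw [hz', hζ', geomSum₂_mul_mul]
  rw [hP, hQ, ← mul_sub, ← mul_add, norm_mul, norm_mul, norm_pow, hl1, one_pow, one_mul, one_mul]
  exact norm_sub_add_norm_add_geomSum₂_conj_le hn hu

theorem norm_sub_add_norm_add_geomSum₂_le {n : ℕ} (hn : 2 ≤ n) {z ζ : ℂ} (hz : ‖z‖ ≤ 1)
    (hζ : ‖ζ‖ ≤ 1) :
    ‖n * z ^ (n - 1) - geomSum₂ n z ζ‖ + ‖n * z ^ (n - 1) + geomSum₂ n z ζ‖ ≤
      2 * √(2 * n ^ 3 / (n + 1)) := by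
  refine norm_add_norm_le_of_forall_norm_eq_one (f := fun ζ => n * z ^ (n - 1) - geomSum₂ n z ζ)
    (g := fun ζ => n * z ^ (n - 1) + geomSum₂ n z ζ) (by unfold geomSum₂; fun_prop)
    (by unfold geomSum₂; fun_prop) (fun ζ hζ => ?_) hζ
  exact norm_add_norm_le_of_forall_norm_eq_one (f := fun z => n * z ^ (n - 1) - geomSum₂ n z ζ)
    (g := fun z => n * z ^ (n - 1) + geomSum₂ n z ζ) (by unfold geomSum₂; fun_prop)
    (by unfold geomSum₂; fun_prop)
    (fun z hz => norm_sub_add_norm_add_geomSum₂_le_of_norm_eq_one hn hz hζ) hz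

theorem one_add_mul_geomSum₂_ne_zero {n : ℕ} {A z ζ : ℂ} (hA : ‖A‖ * n < 1) (hz : ‖z‖ ≤ 1)
    (hζ : ‖ζ‖ ≤ 1) : 1 + A * geomSum₂ n z ζ ≠ 0 := by
  intro h
  have h1 : ‖A * geomSum₂ n z ζ‖ = 1 := by rw [← neg_eq_of_add_eq_zero_right h, norm_neg, norm_one]
  have h2 : ‖A * geomSum₂ n z ζ‖ ≤ ‖A‖ * n :=
    norm_mul_le_of_le le_rfl (norm_geomSum₂_le n hz hζ)
  linarith

theorem lt_sqrt_two_mul_pow_three_div {n : ℝ} (hn : 1 < n) : n < √(2 * n ^ 3 / (n + 1)) :=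
  (Real.lt_sqrt (by linarith)).2 <| by
    rw [lt_div_iff₀ (by linarith)]
    nlinarith [mul_pos (pow_pos (by linarith : 0 < n) 2) (sub_pos.2 hn)]

/-- z + A zⁿ is uniformly starlike when |A| ≤ √((n+1)/(2n³)). -/
theorem ust_monomial_perturbation (n : ℕ) (hn : 2 ≤ n) (A : ℂ)
    (hA : ‖A‖ ≤ Real.sqrt (((n : ℝ) + 1) / (2 * (n : ℝ) ^ 3))) :
    IsUST (fun z => z + A * z ^ n) := by
  set R := √(2 * (n : ℝ) ^ 3 / (n + 1))
  have hAR : ‖A‖ ≤ R⁻¹ := by rwa [← Real.sqrt_inv, inv_div]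
  have hnR : (n : ℝ) < R := lt_sqrt_two_mul_pow_three_div (by exact_mod_cast hn)
  have hR : 0 < R := by linarith [n.cast_nonneg (α := ℝ)]
  have hAn : ‖A‖ * n < 1 := by
    calc ‖A‖ * n ≤ R⁻¹ * n := by gcongr
      _ < 1 := by rwa [inv_mul_lt_one₀ hR]
  have hderiv (z : ℂ) : deriv (fun z => z + A * z ^ n) z = 1 + A * (n * z ^ (n - 1)) :=
    ((hasDerivAt_id z).add ((hasDerivAt_pow n z).const_mul A)).deriv
  have hsub (z ζ : ℂ) :
      z + A * z ^ n - (ζ + A * ζ ^ n) = (z - ζ) * (1 + A * geomSum₂ n z ζ) := by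
    linear_combination A * (geomSum₂_mul_sub n z ζ).symm
  have hdisk (z : ℂ) (hz : z ∈ unitDisk) : ‖z‖ ≤ 1 := (mem_ball_zero_iff.1 hz).le
  refine ⟨⟨(by fun_prop : Differentiable ℂ _).differentiableOn,
    by simp [zero_pow (by omega : n ≠ 0)], by simp [hderiv, zero_pow (by omega : n - 1 ≠ 0)]⟩,
    fun z hz ζ hζ h => ?_, fun z hz ζ hζ hne => ?_⟩
  · have h0 := hsub z ζ
    rw [show z + A * z ^ n = ζ + A * ζ ^ n from h, sub_self, eq_comm, mul_eq_zero] at h0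
    exact sub_eq_zero.1 <| h0.resolve_right <|
      one_add_mul_geomSum₂_ne_zero hAn (hdisk z hz) (hdisk ζ hζ)
  · rw [hderiv, hsub, mul_div_mul_left _ _ (sub_ne_zero.2 hne)]
    refine re_one_add_mul_div_one_add_mul_nonneg ?_
    calc _ ≤ R⁻¹ * (2 * R) := mul_le_mul hAR
          (norm_sub_add_norm_add_geomSum₂_le hn (hdisk z hz) (hdisk ζ hζ)) (by positivity)
          (by positivity)
      _ = 2 := by rw [mul_left_comm, inv_mul_cancel₀ hR.ne', mul_one]
end
end

section
/- Let f ∈ UST and let a₂ = f''(0)/2. Then for every ζ ∈ 𝔻 with ζ ≠ 0, |(f(ζ)(1 − 2a₂ζ) − ζ)/ζ²| ≤ 2·Re(f(ζ)/ζ), and for every z ∈ 𝔻 with z ≠ 0, |(f(z) − z)/(z²·f'(z))| ≤ 2·Re(f(z)/(z·f'(z))). -/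
open Complex Metric Set

noncomputable section

/-! For `ζ ∈ 𝔻` the function `q w = (f w - f ζ) / ((w - ζ) f'(w))`, and for `z ∈ 𝔻` the function
`q w = (f w - f z) / ((w - z) f'(z))`, is the reciprocal of a quantity whose real part is
nonnegative by uniform starlikeness, so `Re q ≥ 0` off the puncture. At `0` these functions take
the values `f ζ / ζ` and `f z / (z f'(z))`, and their derivatives are exactly the two quantities
to be bounded; so both inequalities are Carathéodory's bound `‖q'(0)‖ ≤ 2 Re q(0)`.

Since `q` is only known to be holomorphic off the puncture, Carathéodory's bound is proved on a
punctured disk: a Cayley transform of `q` is bounded by `1`, so its singularity is removable and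
the Schwarz lemma applies. As `f'` is not known to be zero-free, the first `q` is handled through `1 / q`, which is
holomorphic off the puncture. -/

open Filter Function Topology

/-- The Schwarz lemma survives one puncture, since a bounded singularity is removable. -/
theorem norm_deriv_le_div_of_mapsTo_ball_diff_singleton {E : Type*} [NormedAddCommGroup E]
    [NormedSpace ℂ E] [CompleteSpace E] {ω : ℂ → E} {c ζ : ℂ} {R M : ℝ}
    (hζ : ζ ∈ ball c R) (hζc : ζ ≠ c) (hd : DifferentiableOn ℂ ω (ball c R \ {ζ}))
    (hmaps : MapsTo ω (ball c R \ {ζ}) (closedBall (ω c) M)) :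
    ‖deriv ω c‖ ≤ M / R := by
  set W := update ω ζ (limUnder (𝓝[≠] ζ) ω)
  have hW : DifferentiableOn ℂ W (ball c R) := by
    refine differentiableOn_update_limUnder_of_bddAbove (isOpen_ball.mem_nhds hζ) hd
      ⟨‖ω c‖ + M, ?_⟩
    rintro _ ⟨w, hw, rfl⟩
    simpa using norm_le_norm_add_const_of_dist_le (hmaps hw)
  have hW_of_ne : ∀ w, w ≠ ζ → W w = ω w := fun w hw => update_of_ne hw _ _
  have hWω : W =ᶠ[𝓝 c] ω := by
    filter_upwards [isOpen_compl_singleton.mem_nhds hζc.symm] with w hw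
    exact hW_of_ne w hw
  have hWmaps : MapsTo W (ball c R) (closedBall (W c) M) := by
    rw [hWω.eq_of_nhds]
    intro w hw
    rcases eq_or_ne w ζ with rfl | hwζ
    · refine isClosed_closedBall.mem_of_tendsto
        ((hW.continuousOn.continuousAt (isOpen_ball.mem_nhds hw)).tendsto.mono_left
          (nhdsWithin_le_nhds (s := {w}ᶜ))) ?_
      filter_upwards [self_mem_nhdsWithin,
        mem_nhdsWithin_of_mem_nhds (isOpen_ball.mem_nhds hw)] with v hvw hv
      rw [hW_of_ne v hvw]
      exact hmaps ⟨hv, hvw⟩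
    · rw [hW_of_ne w hwζ]
      exact hmaps ⟨hw, hwζ⟩
  rw [← hWω.deriv_eq]
  exact norm_deriv_le_div_of_mapsTo_ball hW hWmaps (pos_of_mem_ball hζ)

theorem norm_sub_le_norm_add_conj_add {u a : ℂ} {ε : ℝ} (hu : 0 ≤ u.re) (ha : 0 ≤ a.re)
    (hε : 0 ≤ ε) : ‖u - a‖ ≤ ‖u + (starRingEnd ℂ) a + ε‖ := by
  rw [← sq_le_sq₀ (norm_nonneg _) (norm_nonneg _), Complex.sq_norm, Complex.sq_norm,
    normSq_apply, normSq_apply]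
  simp only [sub_re, sub_im, add_re, add_im, conj_re, conj_im, ofReal_re, ofReal_im]
  nlinarith [mul_nonneg (by linarith : 0 ≤ 2 * u.re + ε) (by linarith : 0 ≤ 2 * a.re + ε)]

theorem norm_deriv_mul_le_two_mul_re {p : ℂ → ℂ} {c ζ : ℂ} {R : ℝ}
    (hζ : ζ ∈ ball c R) (hζc : ζ ≠ c) (hd : DifferentiableOn ℂ p (ball c R \ {ζ}))
    (hre : ∀ w ∈ ball c R \ {ζ}, 0 ≤ (p w).re) :
    ‖deriv p c‖ * R ≤ 2 * (p c).re := by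
  have hR : 0 < R := pos_of_mem_ball hζ
  have hc : c ∈ ball c R \ {ζ} := ⟨mem_ball_self hR, hζc.symm⟩
  refine le_of_forall_pos_le_add fun ε hε => ?_
  set a := p c
  have hden : ∀ w ∈ ball c R \ {ζ}, 0 < (p w + (starRingEnd ℂ) a + ε).re := by
    intro w hw
    simp only [add_re, conj_re, ofReal_re]
    linarith [hre w hw, hre c hc]
  -- Cayley transform of the right half-plane onto the disk; `ε` keeps the denominator off zero
  set ω := fun w => (p w - a) / (p w + (starRingEnd ℂ) a + ε)
  have hωd : DifferentiableOn ℂ ω (ball c R \ {ζ}) :=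
    (hd.sub_const a).div ((hd.add_const _).add_const _) fun w hw h => by simpa [h] using hden w hw
  have hmaps : MapsTo ω (ball c R \ {ζ}) (closedBall (ω c) 1) := by
    intro w hw
    rw [mem_closedBall, show ω c = 0 by simp [ω, a], dist_zero_right, norm_div]
    exact div_le_one_of_le₀ (norm_sub_le_norm_add_conj_add (hre w hw) (hre c hc) hε.le)
      (norm_nonneg _)
  have hpos : 0 < 2 * a.re + ε := by linarith [hre c hc]
  have hden_c : a + (starRingEnd ℂ) a + ε = ((2 * a.re + ε : ℝ) : ℂ) := by
    rw [add_conj]; push_cast; ring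
  have hp : HasDerivAt p (deriv p c) c :=
    (hd.differentiableAt ((isOpen_ball.sdiff isClosed_singleton).mem_nhds hc)).hasDerivAt
  have hωc : HasDerivAt ω (deriv p c / ((2 * a.re + ε : ℝ) : ℂ)) c := by
    have hne : a + (starRingEnd ℂ) a + ε ≠ 0 := by rw [hden_c]; exact_mod_cast hpos.ne'
    refine ((hp.sub_const a).div ((hp.add_const _).add_const (ε : ℂ)) hne).congr_deriv ?_
    rw [sub_self, zero_mul, sub_zero, hden_c]
    field_simp
  have := norm_deriv_le_div_of_mapsTo_ball_diff_singleton hζ hζc hωd hmaps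
  rw [hωc.deriv, norm_div, norm_real, Real.norm_of_nonneg hpos.le,
    div_le_div_iff₀ hpos hR, one_mul] at this
  linarith

theorem HasDerivAt.norm_mul_le_two_mul_re_of_differentiableOn_inv {q : ℂ → ℂ} {q' c ζ : ℂ}
    {R : ℝ} (hq : HasDerivAt q q' c) (hqc : q c ≠ 0) (hζ : ζ ∈ ball c R) (hζc : ζ ≠ c)
    (hd : DifferentiableOn ℂ (fun w => (q w)⁻¹) (ball c R \ {ζ}))
    (hre : ∀ w ∈ ball c R \ {ζ}, 0 ≤ (q w).re) :
    ‖q'‖ * R ≤ 2 * (q c).re := by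
  have hre_inv : ∀ w ∈ ball c R \ {ζ}, 0 ≤ ((q w)⁻¹).re := fun w hw => by
    rw [inv_re]
    exact div_nonneg (hre w hw) (normSq_nonneg _)
  have h := norm_deriv_mul_le_two_mul_re hζ hζc hd hre_inv
  have hinv : HasDerivAt (fun w => (q w)⁻¹) (-q' / q c ^ 2) c := hq.inv hqc
  rw [hinv.deriv, inv_re, norm_div, norm_neg, norm_pow, normSq_eq_norm_sq,
    div_mul_eq_mul_div, mul_div_assoc', div_le_div_iff_of_pos_right (by positivity)] at h
  exact h

section dslope

variable {𝕜 E : Type*} [NontriviallyNormedField 𝕜] [NormedAddCommGroup E] [NormedSpace 𝕜 E]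

theorem dslope_ne_zero_of_injOn {f : 𝕜 → E} {s : Set 𝕜} {a b : 𝕜} (hf : InjOn f s)
    (ha : a ∈ s) (hb : b ∈ s) (hba : b ≠ a) : dslope f a b ≠ 0 := by
  rw [dslope_of_ne f hba, slope_def_module]
  exact smul_ne_zero (inv_ne_zero (sub_ne_zero.2 hba)) (sub_ne_zero.2 fun h => hba (hf hb ha h))

theorem hasDerivAt_dslope_of_ne {f : 𝕜 → 𝕜} {f' a b : 𝕜} (hf : HasDerivAt f f' b) (hba : b ≠ a) :
    HasDerivAt (dslope f a) ((f' * (b - a) - (f b - f a)) / (b - a) ^ 2) b := by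
  refine (((hf.sub_const (f a)).div ((hasDerivAt_id' b).sub_const a) (sub_ne_zero.2 hba))
    |>.congr_of_eventuallyEq ((dslope_eventuallyEq_slope_of_ne f hba).trans
      (.of_forall fun w => slope_def_field f a w))).congr_deriv ?_
  rw [mul_one]

end dslope

theorem dslope_zero_of_map_zero {f : ℂ → ℂ} {ζ : ℂ} (hf0 : f 0 = 0) (hζ0 : ζ ≠ 0) :
    dslope f ζ 0 = f ζ / ζ := by
  rw [dslope_of_ne f hζ0.symm, slope_def_field, hf0, zero_sub, zero_sub, neg_div_neg_eq]

theorem IsNormalized.hasDerivAt_dslope_zero {f : ℂ → ℂ} (hf : IsNormalized f) {ζ : ℂ}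
    (hζ0 : ζ ≠ 0) : HasDerivAt (dslope f ζ) ((f ζ - ζ) / ζ ^ 2) 0 := by
  obtain ⟨hfd, hf0, hf'0⟩ := hf
  have hf' : HasDerivAt f 1 0 :=
    hf'0 ▸ (hfd.differentiableAt (isOpen_ball.mem_nhds (mem_ball_self one_pos))).hasDerivAt
  refine (hasDerivAt_dslope_of_ne hf' hζ0.symm).congr_deriv ?_
  rw [hf0]
  ring

theorem IsUST.re_dslope_div_deriv_nonneg {f : ℂ → ℂ} (hf : IsUST f) {z ζ : ℂ}
    (hz : z ∈ unitDisk) (hζ : ζ ∈ unitDisk) (hzζ : z ≠ ζ) :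
    0 ≤ (dslope f ζ z / deriv f z).re := by
  rw [dslope_of_ne f hzζ, slope_def_field, div_div, ← inv_div, inv_re]
  exact div_nonneg (hf.2.2 z hz ζ hζ hzζ) (normSq_nonneg _)

theorem IsUST.norm_sub_div_sq_le_two_mul_re_div {f : ℂ → ℂ} (hf : IsUST f) {ζ : ℂ}
    (hζ : ζ ∈ unitDisk) (hζ0 : ζ ≠ 0) :
    ‖(f ζ * (1 - deriv (deriv f) 0 * ζ) - ζ) / ζ ^ 2‖ ≤ 2 * (f ζ / ζ).re := by
  obtain ⟨hfd, hf0, hf'0⟩ := hf.1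
  have hinj : InjOn f unitDisk := hf.2.1
  have h0 : (0 : ℂ) ∈ unitDisk := mem_ball_self one_pos
  have hfζ : f ζ ≠ 0 := fun h => hζ0 (hinj hζ h0 (h.trans hf0.symm))
  have hf'd : DifferentiableOn ℂ (deriv f) unitDisk := hfd.deriv isOpen_ball
  have hq0 : dslope f ζ 0 / deriv f 0 = f ζ / ζ := by
    rw [hf'0, div_one, dslope_zero_of_map_zero hf0 hζ0]
  have hq : HasDerivAt (fun w => dslope f ζ w / deriv f w)
      ((f ζ * (1 - deriv (deriv f) 0 * ζ) - ζ) / ζ ^ 2) 0 := by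
    refine ((hf.1.hasDerivAt_dslope_zero hζ0).div
      (hf'd.differentiableAt (isOpen_ball.mem_nhds h0)).hasDerivAt
      (by rw [hf'0]; exact one_ne_zero)).congr_deriv ?_
    rw [hf'0, dslope_zero_of_map_zero hf0 hζ0]
    field_simp
    ring
  have hd : DifferentiableOn ℂ (fun w => (dslope f ζ w / deriv f w)⁻¹) (unitDisk \ {ζ}) := by
    simp only [inv_div]
    exact (hf'd.mono sdiff_subset).div
      (((Complex.differentiableOn_dslope (isOpen_ball.mem_nhds hζ)).2 hfd).mono sdiff_subset)
      fun w hw => dslope_ne_zero_of_injOn hinj hζ hw.1 hw.2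
  simpa [hq0] using hq.norm_mul_le_two_mul_re_of_differentiableOn_inv
    (hq0 ▸ div_ne_zero hfζ hζ0) hζ hζ0 hd
    fun w hw => hf.re_dslope_div_deriv_nonneg hw.1 hζ hw.2

theorem IsUST.norm_sub_div_sq_mul_deriv_le_two_mul_re_div {f : ℂ → ℂ} (hf : IsUST f) {z : ℂ}
    (hz : z ∈ unitDisk) (hz0 : z ≠ 0) :
    ‖(f z - z) / (z ^ 2 * deriv f z)‖ ≤ 2 * (f z / (z * deriv f z)).re := by
  have hq : HasDerivAt (fun w => dslope f z w / deriv f z) ((f z - z) / (z ^ 2 * deriv f z)) 0 :=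
    ((hf.1.hasDerivAt_dslope_zero hz0).div_const _).congr_deriv (div_div _ _ _)
  have hd : DifferentiableOn ℂ (fun w => dslope f z w / deriv f z) (unitDisk \ {z}) :=
    (((Complex.differentiableOn_dslope (isOpen_ball.mem_nhds hz)).2 hf.1.1).div_const _).mono
      sdiff_subset
  have hre : ∀ w ∈ unitDisk \ {z}, 0 ≤ (dslope f z w / deriv f z).re := by
    rintro w ⟨hw, hwz : w ≠ z⟩
    rw [dslope_of_ne f hwz, slope_comm, ← dslope_of_ne f hwz.symm]
    exact hf.re_dslope_div_deriv_nonneg hz hw hwz.symm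
  simpa [hq.deriv, dslope_zero_of_map_zero hf.1.2.1 hz0, div_div] using
    norm_deriv_mul_le_two_mul_re hz hz0 hd hre

/-- Goodman's positivity inequalities for uniformly starlike functions. -/
theorem ust_positive_real_part_inequalities (f : ℂ → ℂ) (hf : IsUST f) (a₂ : ℂ)
    (ha₂ : a₂ = deriv (deriv f) 0 / 2) :
    (∀ ζ ∈ unitDisk, ζ ≠ 0 →
        ‖(f ζ * (1 - 2 * a₂ * ζ) - ζ) / ζ ^ 2‖ ≤ 2 * (f ζ / ζ).re) ∧
    (∀ z ∈ unitDisk, z ≠ 0 →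
        ‖(f z - z) / (z ^ 2 * deriv f z)‖ ≤
          2 * (f z / (z * deriv f z)).re) := by
  refine ⟨fun ζ hζ hζ0 => ?_, fun z hz hz0 => hf.norm_sub_div_sq_mul_deriv_le_two_mul_re_div hz hz0⟩
  rw [ha₂, mul_div_cancel₀ _ two_ne_zero]
  exact hf.norm_sub_div_sq_le_two_mul_re_div hζ hζ0
end
end

section
/- Let f be normalized analytic on 𝔻 and suppose Re(f'(w)/f'(z)) > 0 for all z, w ∈ 𝔻. Then f is univalent on 𝔻 and f ∈ UST. -/
/-! Noshiro–Warschawski: on a convex domain, `Re g' > 0` makes every difference quotient of `g`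
have positive real part, by the mean value theorem for `t ↦ Re (g (γ t) / (z - ζ))` along the
segment `γ` from `ζ` to `z`. Fixing `z` and taking `g = f / f'(z)` shows that
`(f z - f ζ) / ((z - ζ) f'(z))` has positive real part; so `f z ≠ f ζ`, and the UST quotient, its
reciprocal, has positive real part too. -/

open Complex Metric Set

noncomputable section

open AffineMap in
theorem re_slope_pos_of_re_deriv_pos {U : Set ℂ} (hU : Convex ℝ U) (hUo : IsOpen U) {g : ℂ → ℂ}
    (hg : DifferentiableOn ℂ g U) (hpos : ∀ w ∈ U, 0 < (deriv g w).re) {z ζ : ℂ} (hz : z ∈ U)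
    (hζ : ζ ∈ U) (hne : z ≠ ζ) :
    0 < ((g z - g ζ) / (z - ζ)).re := by
  set γ : ℝ → ℂ := ⇑(lineMap ζ z : ℝ →ᵃ[ℝ] ℂ)
  have hγU : MapsTo γ (Icc 0 1) U := hU.mapsTo_lineMap hζ hz
  have hderiv : ∀ t ∈ Icc (0 : ℝ) 1,
      HasDerivAt (fun t => (g (γ t) / (z - ζ)).re) (deriv g (γ t)).re t := by
    intro t ht
    have hgγ := ((hg.differentiableAt (hUo.mem_nhds (hγU ht))).hasDerivAt.comp t
      hasDerivAt_lineMap).div_const (z - ζ)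
    rw [mul_div_cancel_right₀ _ (sub_ne_zero.mpr hne)] at hgγ
    exact reCLM.hasFDerivAt.comp_hasDerivAt t hgγ
  obtain ⟨c, hc, hslope⟩ := exists_hasDerivAt_eq_slope _ _ zero_lt_one
    (fun t ht => (hderiv t ht).continuousAt.continuousWithinAt)
    (fun t ht => hderiv t (Ioo_subset_Icc_self ht))
  simp only [γ, lineMap_apply_one, lineMap_apply_zero, sub_zero, div_one] at hslope
  rw [sub_div, sub_re, ← hslope]
  exact hpos _ (hγU (Ioo_subset_Icc_self hc))

/-- Re(f'(w)/f'(z)) > 0 on 𝔻 × 𝔻 implies f is univalent and uniformly starlike. -/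
theorem ust_of_deriv_quotient_positive (f : ℂ → ℂ) (hf : IsNormalized f)
    (h : ∀ z ∈ unitDisk, ∀ w ∈ unitDisk, 0 < (deriv f w / deriv f z).re) :
    Set.InjOn f unitDisk ∧ IsUST f := by
  have hquot : ∀ z ∈ unitDisk, ∀ ζ ∈ unitDisk, z ≠ ζ →
      0 < ((f z - f ζ) / ((z - ζ) * deriv f z)).re := by
    intro z hz ζ hζ hne
    have := re_slope_pos_of_re_deriv_pos (convex_ball 0 1) isOpen_ball
      (hf.1.div_const (deriv f z)) (fun w hw => by simpa using h z hz w hw) hz hζ hne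
    rwa [← sub_div, div_div, mul_comm (deriv f z)] at this
  have hinj : InjOn f unitDisk := fun z hz ζ hζ hfeq =>
    by_contra fun hne => (hquot z hz ζ hζ hne).ne' (by simp [hfeq])
  refine ⟨hinj, hf, hinj, fun z hz ζ hζ hne => ?_⟩
  rw [← inv_div, inv_re]
  exact div_nonneg (hquot z hz ζ hζ hne).le (normSq_nonneg _)
end
end

section
/- Let (aₙ)_{n≥2} be nonnegative real numbers such that the power series f(z) = z − Σ_{n≥2} aₙ zⁿ converges on 𝔻 and defines an analytic function there. Then f ∈ UCV if and only if Σ_{n≥2} n(2n−1)aₙ ≤ 1. -/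
open Complex Metric Set

noncomputable section

/-!
Write `f(z) = z - ∑ bₙ z^{n+2}` with `bₙ ≥ 0`. Differentiating termwise, `f' = 1 - T` and
`z f'' = -P`, where `T` and `P` have the nonnegative coefficients `(n+2) bₙ` and
`(n+2)(n+1) bₙ` in front of `z^{n+1}`; the weight `(n+2)(2n+3)` of the theorem is exactly the
coefficient of `2P + T`.

If `∑ (n+2)(2n+3) bₙ ≤ 1`, then `2|P(z)| + |T(z)| ≤ |z| < 1`, so `w = z f''/f'` satisfies
`|w| < 1/2`, which implies `|w| < 1 + Re w`; moreover `|T| ≤ 1/3`, so `z ↦ ∑ bₙ z^{n+2}` is a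
contraction and `f` is injective.

Conversely, at a real point `r ∈ [0,1)` with `T(r) < 1`, `w = -P(r)/(1 - T(r)) ≤ 0` and the UCV
inequality says `2P(r) + T(r) < 1`. As `T ≤ P`, this traps `T(r)` below `1/3`, so by continuity
`T` never reaches `1` on `[0,1)`. Hence `∑ (n+2)(2n+3) bₙ r^{n+1} < 1` for all `r < 1`, and the
bound follows as `r → 1`.
-/

open Filter Topology

def shiftedPowerSeries (c : ℕ → ℝ) (k : ℕ) (z : ℂ) : ℂ :=
  ∑' n, (c n : ℂ) * z ^ (n + k)

namespace shiftedPowerSeries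

variable {c : ℕ → ℝ} {k : ℕ} {ρ : ℝ} {z : ℂ}

theorem norm_term_le (n : ℕ) {w : ℂ} (hw : ‖w‖ ≤ ρ) :
    ‖(c n : ℂ) * w ^ (n + k)‖ ≤ |c n| * ρ ^ (n + k) := by
  rw [norm_mul, norm_pow, Complex.norm_real, Real.norm_eq_abs]
  gcongr

theorem differentiableAt (hc : Summable fun n => |c n| * ρ ^ (n + k)) (hz : ‖z‖ < ρ) :
    DifferentiableAt ℂ (shiftedPowerSeries c k) z :=
  (Complex.differentiableOn_tsum_of_summable_norm hc
    (fun _ => ((differentiable_pow _).const_mul _).differentiableOn) isOpen_ball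
    (fun n _ hw => norm_term_le n (mem_ball_zero_iff.mp hw).le)).differentiableAt
    (isOpen_ball.mem_nhds (mem_ball_zero_iff.mpr hz))

theorem hasSum_deriv (hc : Summable fun n => |c n| * ρ ^ (n + (k + 1))) (hz : ‖z‖ < ρ) :
    HasSum (fun n => (((n + k + 1) * c n : ℝ) : ℂ) * z ^ (n + k))
      (deriv (shiftedPowerSeries c (k + 1)) z) := by
  refine (Complex.hasSum_deriv_of_summable_norm hc
    (fun _ => ((differentiable_pow _).const_mul _).differentiableOn) isOpen_ball
    (fun n _ hw => norm_term_le n (mem_ball_zero_iff.mp hw).le)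
    (mem_ball_zero_iff.mpr hz)).congr_fun fun n => ?_
  rw [deriv_const_mul _ (differentiableAt_pow _), deriv_pow_field,
    show n + (k + 1) - 1 = n + k by omega]
  push_cast
  ring

theorem hasDerivAt (hc : Summable fun n => |c n| * ρ ^ (n + (k + 1))) (hz : ‖z‖ < ρ) :
    HasDerivAt (shiftedPowerSeries c (k + 1))
      (shiftedPowerSeries (fun n => (n + k + 1) * c n) k z) z := by
  rw [shiftedPowerSeries, (hasSum_deriv hc hz).tsum_eq]
  exact (differentiableAt hc hz).hasDerivAt

-- Applying `hasSum_deriv` to the coefficients `|cₙ|` at a real point gives absolute convergence.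
theorem summable_abs_deriv (hc : Summable fun n => |c n| * ρ ^ (n + (k + 1))) {r : ℝ}
    (hr0 : 0 ≤ r) (hr : r < ρ) : Summable fun n => |(n + k + 1) * c n| * r ^ (n + k) := by
  have habs : Summable fun n => |(|c n|)| * ρ ^ (n + (k + 1)) := by simpa only [abs_abs] using hc
  have h := (hasSum_deriv habs (z := r)
    (by rwa [Complex.norm_real, Real.norm_of_nonneg hr0])).summable
  simp only [← Complex.ofReal_pow, ← Complex.ofReal_mul, Complex.summable_ofReal] at h
  refine h.congr fun n => ?_
  rw [abs_mul, abs_of_nonneg (by positivity : (0 : ℝ) ≤ n + k + 1)]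

theorem apply_ofReal (c : ℕ → ℝ) (k : ℕ) (r : ℝ) :
    shiftedPowerSeries c k r = ((∑' n, c n * r ^ (n + k) : ℝ) : ℂ) := by
  simp only [shiftedPowerSeries, Complex.ofReal_tsum, Complex.ofReal_mul, Complex.ofReal_pow]

theorem mul_eq_succ (c : ℕ → ℝ) (k : ℕ) (z : ℂ) :
    z * shiftedPowerSeries c k z = shiftedPowerSeries c (k + 1) z := by
  rw [shiftedPowerSeries, ← tsum_mul_left]
  exact tsum_congr fun n => by ring

theorem norm_le (hc : ∀ n, 0 ≤ c n) (hs : Summable c) (hz : ‖z‖ ≤ 1) :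
    ‖shiftedPowerSeries c k z‖ ≤ ‖z‖ ^ k * ∑' n, c n := by
  have hle : ∀ n, ‖(c n : ℂ) * z ^ (n + k)‖ ≤ ‖z‖ ^ k * c n := fun n => by
    rw [norm_mul, norm_pow, Complex.norm_real, Real.norm_of_nonneg (hc n), pow_add, mul_comm]
    exact mul_le_mul_of_nonneg_right (mul_le_of_le_one_left (pow_nonneg (norm_nonneg z) k)
      (pow_le_one₀ (norm_nonneg z) hz)) (hc n)
  rw [← tsum_mul_left]
  exact tsum_of_norm_bounded (hs.mul_left _).hasSum hle

end shiftedPowerSeries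

theorem IsPreconnected.forall_lt_of_forall_lt_imp_lt {X : Type*} [TopologicalSpace X]
    {s : Set X} (hs : IsPreconnected s) {u : X → ℝ} (hu : ContinuousOn u s) {x₀ : X}
    (hx₀ : x₀ ∈ s) {a b : ℝ} (hab : a < b) (hx₀b : u x₀ < b)
    (h : ∀ x ∈ s, u x < b → u x < a) : ∀ x ∈ s, u x < b := by
  intro y hy
  by_contra! hyb
  obtain ⟨x, hx, hxa⟩ := hs.intermediate_value hx₀ hy hu ⟨(h x₀ hx₀ hx₀b).le, hab.le.trans hyb⟩
  exact (h x hx (hxa ▸ hab)).ne hxa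

theorem summable_and_tsum_le_of_tsum_mul_pow_succ_le {c : ℕ → ℝ} {C : ℝ} (hc : ∀ n, 0 ≤ c n)
    (hs : ∀ r ∈ Ioo (0 : ℝ) 1, Summable fun n => c n * r ^ (n + 1))
    (h : ∀ r ∈ Ioo (0 : ℝ) 1, ∑' n, c n * r ^ (n + 1) ≤ C) :
    Summable c ∧ ∑' n, c n ≤ C := by
  have partial_le : ∀ N, ∑ n ∈ Finset.range N, c n ≤ C := by
    intro N
    have hcont : Continuous fun r : ℝ => ∑ n ∈ Finset.range N, c n * r ^ (n + 1) := by fun_prop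
    have hlim : Tendsto (fun r : ℝ => ∑ n ∈ Finset.range N, c n * r ^ (n + 1)) (𝓝[<] 1)
        (𝓝 (∑ n ∈ Finset.range N, c n)) := by
      simpa using (hcont.tendsto 1).mono_left nhdsWithin_le_nhds
    refine le_of_tendsto hlim ?_
    filter_upwards [Ioo_mem_nhdsLT (zero_lt_one' ℝ)] with r hr
    exact ((hs r hr).sum_le_tsum _ fun n _ => mul_nonneg (hc n) (pow_nonneg hr.1.le _)).trans
      (h r hr)
  exact ⟨summable_of_sum_range_le hc partial_le, Real.tsum_le_of_sum_range_le hc partial_le⟩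

theorem norm_lt_re_one_add_of_norm_lt_half {ω : ℂ} (h : ‖ω‖ < 1 / 2) : ‖ω‖ < (1 + ω).re := by
  have := Complex.neg_re ω ▸ norm_neg ω ▸ Complex.re_le_norm (-ω)
  simp only [Complex.add_re, Complex.one_re]
  linarith

theorem norm_neg_div_one_sub_lt_half {p t : ℂ} (h : 2 * ‖p‖ + ‖t‖ < 1) :
    ‖-p / (1 - t)‖ < 1 / 2 := by
  have hden : 1 - ‖t‖ ≤ ‖1 - t‖ := by simpa using norm_sub_norm_le (1 : ℂ) t
  rw [norm_div, norm_neg, div_lt_iff₀ (by linarith [norm_nonneg p])]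
  linarith

theorem two_mul_add_lt_one_of_norm_lt_re {p u : ℝ} (hp : 0 ≤ p) (hu : u < 1)
    (h : ‖(-p / (1 - u) : ℂ)‖ < (1 + (-p / (1 - u) : ℂ)).re) : 2 * p + u < 1 := by
  have hx : (-p / (1 - u) : ℂ) = ((-p / (1 - u) : ℝ) : ℂ) := by push_cast; rfl
  rw [hx, Complex.norm_real, Real.norm_eq_abs, Complex.add_re, Complex.one_re,
    Complex.ofReal_re, abs_of_nonpos (div_nonpos_of_nonpos_of_nonneg (by linarith) (by linarith)),
    neg_div, neg_neg] at h
  have hlt : p / (1 - u) < 1 / 2 := by linarith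
  rw [div_lt_iff₀ (by linarith)] at hlt
  linarith

theorem Convex.injOn_sub_of_norm_hasDerivWithinAt_le {𝕜 : Type*} [RCLike 𝕜] {s : Set 𝕜}
    (hs : Convex ℝ s) {g g' : 𝕜 → 𝕜} (hg : ∀ x ∈ s, HasDerivWithinAt g (g' x) s x) {C : ℝ}
    (hbound : ∀ x ∈ s, ‖g' x‖ ≤ C) (hC : C < 1) : InjOn (fun x => x - g x) s := by
  intro x hx y hy hxy
  have hlip := hs.norm_image_sub_le_of_norm_hasDerivWithin_le hg hbound hy hx
  rw [show g x - g y = x - y by linear_combination -hxy] at hlip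
  have : ‖x - y‖ ≤ 0 := by nlinarith [norm_nonneg (x - y)]
  exact sub_eq_zero.mp (norm_le_zero_iff.mp this)

theorem mem_unitDisk {z : ℂ} : z ∈ unitDisk ↔ ‖z‖ < 1 := mem_ball_zero_iff

theorem ofReal_mem_unitDisk {r : ℝ} (hr : r ∈ Ico (0 : ℝ) 1) : (r : ℂ) ∈ unitDisk := by
  rw [mem_unitDisk, Complex.norm_real, Real.norm_of_nonneg hr.1]
  exact hr.2

theorem mem_Ico_half_one_add {r : ℝ} (hr : r ∈ Ico (0 : ℝ) 1) : (1 + r) / 2 ∈ Ico (0 : ℝ) 1 :=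
  ⟨by linarith [hr.1], by linarith [hr.2]⟩

structure HasNegCoeffExpansion (b : ℕ → ℝ) (f : ℂ → ℂ) : Prop where
  nonneg : ∀ n, 0 ≤ b n
  summable : ∀ z ∈ unitDisk, Summable fun n => (b n : ℂ) * z ^ (n + 2)
  eqOn : ∀ z ∈ unitDisk, f z = z - shiftedPowerSeries b 2 z

namespace HasNegCoeffExpansion

variable {b : ℕ → ℝ} {f : ℂ → ℂ}

theorem coeff_le (hf : HasNegCoeffExpansion b f) (n : ℕ) :
    (n + 2) * b n ≤ (n + 2) * (n + 1) * b n ∧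
      (n + 2) * (n + 1) * b n ≤ (n + 2) * (2 * (n + 2) - 1) * b n := by
  have h := mul_nonneg (Nat.cast_nonneg (α := ℝ) n) (hf.nonneg n)
  constructor <;> nlinarith [mul_nonneg (Nat.cast_nonneg (α := ℝ) n) h, hf.nonneg n]

theorem summable_abs_mul_pow (hf : HasNegCoeffExpansion b f) {r : ℝ} (hr : r ∈ Ico (0 : ℝ) 1) :
    Summable fun n => |b n| * r ^ (n + 2) := by
  have h := hf.summable r (ofReal_mem_unitDisk hr)
  simp only [← Complex.ofReal_pow, ← Complex.ofReal_mul, Complex.summable_ofReal] at h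
  simpa only [abs_of_nonneg (hf.nonneg _)] using h

theorem summable_abs_deriv_mul_pow (hf : HasNegCoeffExpansion b f) {r : ℝ}
    (hr : r ∈ Ico (0 : ℝ) 1) : Summable fun n => |(n + 2) * b n| * r ^ (n + 1) := by
  have h := shiftedPowerSeries.summable_abs_deriv (k := 1)
    (hf.summable_abs_mul_pow (mem_Ico_half_one_add hr)) hr.1 (by linarith [hr.2])
  convert h using 4
  push_cast
  ring

theorem hasDerivAt_shiftedPowerSeries (hf : HasNegCoeffExpansion b f) {z : ℂ} (hz : z ∈ unitDisk) :
    HasDerivAt (shiftedPowerSeries b 2) (shiftedPowerSeries (fun n => (n + 2) * b n) 1 z) z := by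
  have hz' := mem_unitDisk.mp hz
  convert shiftedPowerSeries.hasDerivAt (k := 1) (z := z)
    (hf.summable_abs_mul_pow (mem_Ico_half_one_add ⟨norm_nonneg z, hz'⟩)) (by linarith) using 3
  push_cast
  ring

theorem hasDerivAt_shiftedPowerSeries_deriv (hf : HasNegCoeffExpansion b f) {z : ℂ}
    (hz : z ∈ unitDisk) :
    HasDerivAt (shiftedPowerSeries (fun n => (n + 2) * b n) 1)
      (shiftedPowerSeries (fun n => (n + 2) * (n + 1) * b n) 0 z) z := by
  have hz' := mem_unitDisk.mp hz
  convert shiftedPowerSeries.hasDerivAt (k := 0) (z := z)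
    (hf.summable_abs_deriv_mul_pow (mem_Ico_half_one_add ⟨norm_nonneg z, hz'⟩)) (by linarith)
    using 3
  push_cast
  ring

theorem hasDerivAt (hf : HasNegCoeffExpansion b f) {z : ℂ} (hz : z ∈ unitDisk) :
    HasDerivAt f (1 - shiftedPowerSeries (fun n => (n + 2) * b n) 1 z) z :=
  ((hasDerivAt_id z).sub (hf.hasDerivAt_shiftedPowerSeries hz)).congr_of_eventuallyEq
    (eventually_of_mem (isOpen_ball.mem_nhds hz) hf.eqOn)

theorem mul_deriv_deriv (hf : HasNegCoeffExpansion b f) {z : ℂ} (hz : z ∈ unitDisk) :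
    z * deriv (deriv f) z = -shiftedPowerSeries (fun n => (n + 2) * (n + 1) * b n) 1 z := by
  have hderiv : HasDerivAt (deriv f)
      (-shiftedPowerSeries (fun n => (n + 2) * (n + 1) * b n) 0 z) z :=
    ((hf.hasDerivAt_shiftedPowerSeries_deriv hz).const_sub 1).congr_of_eventuallyEq
      (eventually_of_mem (isOpen_ball.mem_nhds hz) fun w hw => (hf.hasDerivAt hw).deriv)
  rw [hderiv.deriv, mul_neg, shiftedPowerSeries.mul_eq_succ]

theorem isNormalized (hf : HasNegCoeffExpansion b f) : IsNormalized f := by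
  have h0 : (0 : ℂ) ∈ unitDisk := mem_unitDisk.mpr (by simp)
  refine ⟨fun z hz => (hf.hasDerivAt hz).differentiableAt.differentiableWithinAt, ?_, ?_⟩
  · simp [hf.eqOn 0 h0, shiftedPowerSeries]
  · simp [(hf.hasDerivAt h0).deriv, shiftedPowerSeries]

theorem summable_deriv_mul_pow (hf : HasNegCoeffExpansion b f) {r : ℝ}
    (hr : r ∈ Ico (0 : ℝ) 1) : Summable fun n => (n + 2) * b n * r ^ (n + 1) := by
  refine (hf.summable_abs_deriv_mul_pow hr).congr fun n => ?_
  rw [abs_of_nonneg (mul_nonneg (by positivity) (hf.nonneg n))]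

theorem summable_deriv_deriv_mul_pow (hf : HasNegCoeffExpansion b f) {r : ℝ}
    (hr : r ∈ Ico (0 : ℝ) 1) : Summable fun n => (n + 2) * (n + 1) * b n * r ^ (n + 1) := by
  have h := shiftedPowerSeries.summable_abs_deriv (k := 0)
    (hf.summable_abs_deriv_mul_pow (mem_Ico_half_one_add hr)) hr.1 (by linarith [hr.2])
  refine (h.mul_left r).congr fun n => ?_
  rw [abs_of_nonneg (mul_nonneg (by positivity) (mul_nonneg (by positivity) (hf.nonneg n)))]
  push_cast
  ring

theorem continuousOn_tsum_deriv_mul_pow (hf : HasNegCoeffExpansion b f) :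
    ContinuousOn (fun r : ℝ => ∑' n, (n + 2) * b n * r ^ (n + 1)) (Ico 0 1) := by
  have hT : ContinuousOn (shiftedPowerSeries (fun n => (n + 2) * b n) 1) unitDisk :=
    fun z hz => (hf.hasDerivAt_shiftedPowerSeries_deriv hz).continuousAt.continuousWithinAt
  refine (Complex.continuous_re.comp_continuousOn (hT.comp Complex.continuous_ofReal.continuousOn
    fun r hr => ofReal_mem_unitDisk hr)).congr fun r _ => ?_
  simp [shiftedPowerSeries.apply_ofReal]

theorem two_mul_add_lt_one_of_isUCV (hf : HasNegCoeffExpansion b f) (hucv : IsUCV f) {r : ℝ}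
    (hr : r ∈ Ico (0 : ℝ) 1) (hu : ∑' n, (n + 2) * b n * r ^ (n + 1) < 1) :
    2 * ∑' n, (n + 2) * (n + 1) * b n * r ^ (n + 1) + ∑' n, (n + 2) * b n * r ^ (n + 1) < 1 := by
  have h := hucv.2.2 r (ofReal_mem_unitDisk hr)
  rw [(hf.hasDerivAt (ofReal_mem_unitDisk hr)).deriv, hf.mul_deriv_deriv (ofReal_mem_unitDisk hr),
    shiftedPowerSeries.apply_ofReal, shiftedPowerSeries.apply_ofReal] at h
  exact two_mul_add_lt_one_of_norm_lt_re
    (tsum_nonneg fun n => mul_nonneg (mul_nonneg (by positivity) (hf.nonneg n))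
      (pow_nonneg hr.1 _)) hu h

theorem summable_and_tsum_le_of_isUCV (hf : HasNegCoeffExpansion b f) (hucv : IsUCV f) :
    Summable (fun n : ℕ => ((n : ℝ) + 2) * (2 * ((n : ℝ) + 2) - 1) * b n) ∧
      ∑' n : ℕ, ((n : ℝ) + 2) * (2 * ((n : ℝ) + 2) - 1) * b n ≤ 1 := by
  have hle : ∀ r ∈ Ico (0 : ℝ) 1, ∑' n, (n + 2) * b n * r ^ (n + 1) ≤
      ∑' n, (n + 2) * (n + 1) * b n * r ^ (n + 1) := fun r hr =>
    (hf.summable_deriv_mul_pow hr).tsum_le_tsum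
      (fun n => mul_le_mul_of_nonneg_right (hf.coeff_le n).1 (pow_nonneg hr.1 _))
      (hf.summable_deriv_deriv_mul_pow hr)
  have hu : ∀ r ∈ Ico (0 : ℝ) 1, ∑' n, (n + 2) * b n * r ^ (n + 1) < 1 :=
    isPreconnected_Ico.forall_lt_of_forall_lt_imp_lt hf.continuousOn_tsum_deriv_mul_pow
      (left_mem_Ico.mpr one_pos) (a := 1 / 3) (by norm_num) (by simp)
      fun r hr hr1 => by linarith [hf.two_mul_add_lt_one_of_isUCV hucv hr hr1, hle r hr]
  have hsplit : ∀ r ∈ Ico (0 : ℝ) 1, HasSum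
      (fun n : ℕ => ((n : ℝ) + 2) * (2 * ((n : ℝ) + 2) - 1) * b n * r ^ (n + 1))
      (2 * ∑' n, (n + 2) * (n + 1) * b n * r ^ (n + 1) + ∑' n, (n + 2) * b n * r ^ (n + 1)) :=
    fun r hr => (((hf.summable_deriv_deriv_mul_pow hr).hasSum.mul_left 2).add
      (hf.summable_deriv_mul_pow hr).hasSum).congr_fun fun n => by ring
  refine summable_and_tsum_le_of_tsum_mul_pow_succ_le
    (fun n => mul_nonneg (by nlinarith) (hf.nonneg n))
    (fun r hr => (hsplit r (Ioo_subset_Ico_self hr)).summable) fun r hr => ?_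
  rw [(hsplit r (Ioo_subset_Ico_self hr)).tsum_eq]
  exact (hf.two_mul_add_lt_one_of_isUCV hucv (Ioo_subset_Ico_self hr)
    (hu r (Ioo_subset_Ico_self hr))).le

theorem norm_shiftedPowerSeries_deriv_le (hf : HasNegCoeffExpansion b f)
    (hs : Summable fun n => (n + 2) * b n) {z : ℂ} (hz : z ∈ unitDisk) :
    ‖shiftedPowerSeries (fun n => (n + 2) * b n) 1 z‖ ≤ ‖z‖ * ∑' n, (n + 2) * b n := by
  simpa using shiftedPowerSeries.norm_le (k := 1)
    (fun n => mul_nonneg (by positivity) (hf.nonneg n)) hs (mem_unitDisk.mp hz).le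

theorem norm_shiftedPowerSeries_deriv_deriv_le (hf : HasNegCoeffExpansion b f)
    (hs : Summable fun n => (n + 2) * (n + 1) * b n) {z : ℂ} (hz : z ∈ unitDisk) :
    ‖shiftedPowerSeries (fun n => (n + 2) * (n + 1) * b n) 1 z‖ ≤
      ‖z‖ * ∑' n, (n + 2) * (n + 1) * b n := by
  simpa using shiftedPowerSeries.norm_le (k := 1)
    (fun n => mul_nonneg (by positivity) (hf.nonneg n)) hs (mem_unitDisk.mp hz).le

theorem injOn (hf : HasNegCoeffExpansion b f) (hs : Summable fun n => (n + 2) * b n)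
    (h : ∑' n, (n + 2) * b n < 1) : InjOn f unitDisk := by
  refine ((convex_ball 0 1).injOn_sub_of_norm_hasDerivWithinAt_le
    (fun z hz => (hf.hasDerivAt_shiftedPowerSeries hz).hasDerivWithinAt)
    (fun z hz => ?_) h).congr fun z hz => (hf.eqOn z hz).symm
  exact (hf.norm_shiftedPowerSeries_deriv_le hs hz).trans
    (mul_le_of_le_one_left (tsum_nonneg fun n => mul_nonneg (by positivity) (hf.nonneg n))
      (mem_unitDisk.mp hz).le)

theorem isUCV_of_tsum_le (hf : HasNegCoeffExpansion b f)
    (hs : Summable (fun n : ℕ => ((n : ℝ) + 2) * (2 * ((n : ℝ) + 2) - 1) * b n))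
    (hle : ∑' n : ℕ, ((n : ℝ) + 2) * (2 * ((n : ℝ) + 2) - 1) * b n ≤ 1) : IsUCV f := by
  have hq : Summable fun n => (n + 2) * b n :=
    hs.of_nonneg_of_le (fun n => mul_nonneg (by positivity) (hf.nonneg n)) fun n =>
      (hf.coeff_le n).1.trans (hf.coeff_le n).2
  have hp : Summable fun n => (n + 2) * (n + 1) * b n :=
    hs.of_nonneg_of_le (fun n => mul_nonneg (by positivity) (hf.nonneg n)) fun n =>
      (hf.coeff_le n).2
  have hsplit : ∑' n : ℕ, ((n : ℝ) + 2) * (2 * ((n : ℝ) + 2) - 1) * b n =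
      2 * ∑' n, (n + 2) * (n + 1) * b n + ∑' n, (n + 2) * b n :=
    ((hp.hasSum.mul_left 2).add hq.hasSum |>.congr_fun fun n => by ring).tsum_eq
  have hqp : ∑' n, (n + 2) * b n ≤ ∑' n, (n + 2) * (n + 1) * b n :=
    hq.tsum_le_tsum (fun n => (hf.coeff_le n).1) hp
  refine ⟨hf.isNormalized, hf.injOn hq (by linarith), fun z hz => ?_⟩
  rw [hf.mul_deriv_deriv hz, (hf.hasDerivAt hz).deriv]
  refine norm_lt_re_one_add_of_norm_lt_half (norm_neg_div_one_sub_lt_half ?_)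
  calc 2 * ‖shiftedPowerSeries (fun n => (n + 2) * (n + 1) * b n) 1 z‖ +
        ‖shiftedPowerSeries (fun n => (n + 2) * b n) 1 z‖
      ≤ ‖z‖ * (2 * ∑' n, (n + 2) * (n + 1) * b n + ∑' n, (n + 2) * b n) := by
        linarith [hf.norm_shiftedPowerSeries_deriv_deriv_le hp hz,
          hf.norm_shiftedPowerSeries_deriv_le hq hz]
    _ ≤ ‖z‖ := mul_le_of_le_one_right (norm_nonneg z) (hsplit ▸ hle)
    _ < 1 := mem_unitDisk.mp hz

end HasNegCoeffExpansion

theorem ucv_negative_coefficients_iff_general (a : ℕ → ℝ) (ha : ∀ n, 2 ≤ n → 0 ≤ a n)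
    (f : ℂ → ℂ)
    (hconv : ∀ z ∈ unitDisk, Summable (fun n : ℕ => (a (n + 2) : ℂ) * z ^ (n + 2)))
    (hf : ∀ z ∈ unitDisk, f z = z - ∑' n : ℕ, (a (n + 2) : ℂ) * z ^ (n + 2)) :
    IsUCV f ↔
      (Summable (fun n : ℕ => ((n : ℝ) + 2) * (2 * ((n : ℝ) + 2) - 1) * a (n + 2)) ∧
        ∑' n : ℕ, ((n : ℝ) + 2) * (2 * ((n : ℝ) + 2) - 1) * a (n + 2) ≤ 1) := by
  have hexp : HasNegCoeffExpansion (fun n => a (n + 2)) f :=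
    ⟨fun n => ha (n + 2) (by omega), hconv, hf⟩
  exact ⟨hexp.summable_and_tsum_le_of_isUCV, fun h => hexp.isUCV_of_tsum_le h.1 h.2⟩

/-- a function with negative coefficients is uniformly convex iff
Σ_{n≥2} n(2n−1)aₙ ≤ 1. -/
theorem ucv_negative_coefficients_iff (a : ℕ → ℝ) (ha : ∀ n, 2 ≤ n → 0 ≤ a n)
    (f : ℂ → ℂ)
    (hconv : ∀ z ∈ unitDisk, Summable (fun n : ℕ => (a (n + 2) : ℂ) * z ^ (n + 2)))
    (hf : ∀ z ∈ unitDisk, f z = z - ∑' n : ℕ, (a (n + 2) : ℂ) * z ^ (n + 2))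
    (hfd : DifferentiableOn ℂ f unitDisk) :
    IsUCV f ↔
      (Summable (fun n : ℕ => ((n : ℝ) + 2) * (2 * ((n : ℝ) + 2) - 1) * a (n + 2)) ∧
        ∑' n : ℕ, ((n : ℝ) + 2) * (2 * ((n : ℝ) + 2) - 1) * a (n + 2) ≤ 1) :=
  ucv_negative_coefficients_iff_general a ha f hconv hf
end
end

section
/- Let (aₙ)_{n≥2} be nonnegative real numbers such that the power series f(z) = z − Σ_{n≥2} aₙ zⁿ converges on 𝔻 and defines an analytic function there. Then f ∈ SP if and only if Σ_{n≥2} (2n−1)aₙ ≤ 1. -/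
/-
For `0 ≤ r < 1` both `f r` and `r f'(r)` are real: with
`V r = ∑ aₙ rⁿ` and `P r = ∑ (n - 1) aₙ rⁿ` one has `f r = r - V r` and `f r - r f'(r) = P r`,
and since the coefficients are nonnegative, `‖z - f z‖ ≤ V ‖z‖` and `‖f z - z f'(z)‖ ≤ P ‖z‖`.
As `z f'/f - 1 = -(f - z f')/f`, both directions come down to `2 P r + V r = ∑ (2n - 1) aₙ rⁿ < r`.
If `f ∈ SP`, evaluate the condition at real `r`; this needs `f r > 0`, which holds because `f` does
not vanish on `(0, 1)` and `f'(0) = 1`. Letting `r → 1` bounds the partial sums of `∑ (2n - 1) aₙ`.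
Conversely, `∑ (2n - 1) aₙ rⁿ ≤ r² < r` gives `‖z f'/f - 1‖ < 1/2`, which implies the SP condition.
-/

open Complex Metric Set

noncomputable section

open FormalMultilinearSeries
open scoped NNReal ENNReal

theorem hasFPowerSeriesOnBall_ofScalars_of_hasSum {𝕜 : Type*} [RCLike 𝕜] {c : ℕ → 𝕜}
    {f : 𝕜 → 𝕜} {r : ℝ≥0∞} (hr : 0 < r)
    (hf : ∀ z ∈ eball (0 : 𝕜) r, HasSum (fun n => c n * z ^ n) (f z)) :
    HasFPowerSeriesOnBall f (ofScalars 𝕜 c) 0 r where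
  r_le := by
    refine ENNReal.le_of_forall_nnreal_lt fun ρ hρ => ?_
    have hρ' : ((ρ : ℝ) : 𝕜) ∈ eball (0 : 𝕜) r := by simpa [edist_zero_right, enorm_eq_nnnorm]
    refine le_radius_of_tendsto _ (l := 0) ?_
    simpa [ofScalars_norm] using (hf _ hρ').summable.tendsto_atTop_zero.norm
  r_pos := hr
  hasSum {z} hz := by
    simpa [ofScalars_apply_eq, mul_comm] using hf z hz

theorem HasFPowerSeriesOnBall.hasSum_mul_deriv_ofScalars {𝕜 : Type*} [NontriviallyNormedField 𝕜]
    [CompleteSpace 𝕜] {c : ℕ → 𝕜} {f : 𝕜 → 𝕜} {r : ℝ≥0∞}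
    (hf : HasFPowerSeriesOnBall f (ofScalars 𝕜 c) 0 r) {z : 𝕜} (hz : z ∈ eball (0 : 𝕜) r) :
    HasSum (fun n => n * c n * z ^ n) (z * deriv f z) := by
  have h := (hf.fderiv.hasSum (by simpa using hz)).mapL (ContinuousLinearMap.apply 𝕜 𝕜 z)
  rw [← hasSum_nat_add_iff' 1]
  convert h using 1
  · funext n
    rw [ContinuousLinearMap.apply_apply, derivSeries_apply_diag, ofScalars_apply_eq]
    push_cast [nsmul_eq_mul, smul_eq_mul]
    ring
  · simp [fderiv_eq_smul_deriv]

section RealCoeffs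

variable {c : ℕ → ℝ} {g : ℂ → ℂ} {k : ℕ} {R : ℝ}

theorem hasSum_re_and_eq_ofReal_of_hasSum_ofReal_mul_pow
    (hg : ∀ z ∈ ball (0 : ℂ) R, HasSum (fun n => (c n : ℂ) * z ^ (n + k)) (g z))
    {r : ℝ} (hr0 : 0 ≤ r) (hr : r < R) :
    HasSum (fun n => c n * r ^ (n + k)) (g r).re ∧ g r = (g r).re := by
  have h : HasSum (fun n => ((c n * r ^ (n + k) : ℝ) : ℂ)) (g r) := by
    simpa using hg r (by simpa [abs_of_nonneg hr0])
  have hre := Complex.hasSum_re h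
  simp only [Complex.ofReal_re] at hre
  exact ⟨hre, h.unique (Complex.hasSum_ofReal.mpr hre)⟩

theorem norm_le_re_norm_of_hasSum_ofReal_mul_pow (hc : ∀ n, 0 ≤ c n)
    (hg : ∀ z ∈ ball (0 : ℂ) R, HasSum (fun n => (c n : ℂ) * z ^ (n + k)) (g z))
    {z : ℂ} (hz : z ∈ ball (0 : ℂ) R) : ‖g z‖ ≤ (g ‖z‖).re :=
  (hg z hz).norm_le_of_bounded
    (hasSum_re_and_eq_ofReal_of_hasSum_ofReal_mul_pow hg (norm_nonneg z) (by simpa using hz)).1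
    fun n => by simp [abs_of_nonneg (hc n)]

end RealCoeffs

theorem summable_and_tsum_le_of_sum_range_mul_pow_le {b : ℕ → ℝ} (hb : ∀ n, 0 ≤ b n) {k : ℕ}
    {C : ℝ} (h : ∀ r ∈ Ioo (0 : ℝ) 1, ∀ N, ∑ n ∈ Finset.range N, b n * r ^ (n + k) ≤ C) :
    Summable b ∧ ∑' n, b n ≤ C := by
  have hN : ∀ N, ∑ n ∈ Finset.range N, b n ≤ C := fun N => by
    have hcont : Continuous fun r : ℝ => ∑ n ∈ Finset.range N, b n * r ^ (n + k) := by fun_prop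
    have hlim := (hcont.tendsto 1).mono_left (nhdsWithin_le_nhds (s := Iio 1))
    simp only [one_pow, mul_one] at hlim
    refine le_of_tendsto hlim ?_
    filter_upwards [Ioo_mem_nhdsLT zero_lt_one] with r hr using h r hr N
  exact ⟨summable_of_sum_range_le hb hN, Real.tsum_le_of_sum_range_le hb hN⟩

theorem pos_of_ne_zero_of_deriv_pos {φ : ℝ → ℝ} {b : ℝ} (hφ : ContinuousOn φ (Ioo 0 b))
    (h0 : φ 0 = 0) (hderiv : 0 < deriv φ 0) (hne : ∀ x ∈ Ioo 0 b, φ x ≠ 0) :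
    ∀ x ∈ Ioo 0 b, 0 < φ x := by
  intro x hx
  obtain ⟨x₀, hsign, hx₀⟩ := ((eventually_nhdsWithin_sign_eq_of_deriv_pos hderiv h0).filter_mono
    (nhdsWithin_le_nhds (s := Ioi 0))).and (Ioo_mem_nhdsGT (hx.1.trans hx.2)) |>.exists
  have hφx₀ : 0 < φ x₀ := by
    rwa [sub_zero, sign_pos hx₀.1, sign_eq_one_iff] at hsign
  by_contra! hφx
  obtain ⟨y, hy, hy0⟩ := isPreconnected_Ioo.intermediate_value hx hx₀ hφ ⟨hφx, hφx₀.le⟩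
  exact hne y hy hy0

theorem Complex.norm_sub_one_lt_re_of_norm_sub_one_lt_half {w : ℂ} (h : ‖w - 1‖ < 1 / 2) :
    ‖w - 1‖ < w.re := by
  have := Complex.re_le_norm (1 - w)
  rw [norm_sub_rev] at this
  simp only [Complex.sub_re, Complex.one_re] at this
  linarith

theorem le_pow_mul_tsum_of_hasSum_mul_pow {b : ℕ → ℝ} (hb : ∀ n, 0 ≤ b n) (hs : Summable b)
    {r : ℝ} (hr0 : 0 ≤ r) (hr1 : r ≤ 1) {k : ℕ} {t : ℝ}
    (ht : HasSum (fun n => b n * r ^ (n + k)) t) : t ≤ r ^ k * ∑' n, b n := by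
  refine hasSum_le (fun n => ?_) ht (hs.hasSum.mul_left (r ^ k))
  calc b n * r ^ (n + k) = b n * r ^ n * r ^ k := by ring
    _ ≤ b n * 1 * r ^ k := by gcongr; exacts [hb n, pow_le_one₀ hr0 hr1]
    _ = r ^ k * b n := by ring

theorem unitDisk_eq_eball : unitDisk = eball (0 : ℂ) 1 := by
  rw [unitDisk, ← ENNReal.coe_one, Metric.eball_coe, NNReal.coe_one]

theorem ofReal_mem_unitDisk_s12 {r : ℝ} (hr0 : 0 ≤ r) (hr1 : r < 1) : (r : ℂ) ∈ unitDisk := by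
  simpa [unitDisk, abs_of_nonneg hr0]

theorem IsNormalized.hasDerivAt_zero {f : ℂ → ℂ} (hf : IsNormalized f) : HasDerivAt f 1 0 := by
  have hd := (hf.1.differentiableAt (isOpen_ball.mem_nhds (mem_ball_self one_pos))).hasDerivAt
  rwa [hf.2.2] at hd

theorem IsSP.apply_ne_zero {f : ℂ → ℂ} (hf : IsSP f) {z : ℂ} (hz : z ∈ unitDisk) (hz0 : z ≠ 0) :
    f z ≠ 0 := fun h0 => by
  have := hf.2 z hz hz0
  norm_num [h0] at this

def HasNegCoeffSeries (a : ℕ → ℝ) (f : ℂ → ℂ) : Prop :=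
  ∀ z ∈ unitDisk, HasSum (fun n : ℕ => (a (n + 2) : ℂ) * z ^ (n + 2)) (z - f z)

def negCoeffs (a : ℕ → ℝ) : ℕ → ℂ
  | 0 => 0
  | 1 => 1
  | n + 2 => -(a (n + 2) : ℂ)

namespace HasNegCoeffSeries

variable {a : ℕ → ℝ} {f : ℂ → ℂ}

theorem of_summable
    (hconv : ∀ z ∈ unitDisk, Summable (fun n : ℕ => (a (n + 2) : ℂ) * z ^ (n + 2)))
    (hf : ∀ z ∈ unitDisk, f z = z - ∑' n : ℕ, (a (n + 2) : ℂ) * z ^ (n + 2)) :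
    HasNegCoeffSeries a f := fun z hz => by
  rw [hf z hz, sub_sub_cancel]
  exact (hconv z hz).hasSum

theorem hasSum_negCoeffs (h : HasNegCoeffSeries a f) {z : ℂ} (hz : z ∈ unitDisk) :
    HasSum (fun n => negCoeffs a n * z ^ n) (f z) := by
  rw [← hasSum_nat_add_iff' 2]
  convert (h z hz).neg using 1
  · funext n
    simp [negCoeffs]
  · simp [Finset.sum_range_succ, negCoeffs]

theorem hasFPowerSeriesOnBall (h : HasNegCoeffSeries a f) :
    HasFPowerSeriesOnBall f (ofScalars ℂ (negCoeffs a)) 0 1 :=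
  hasFPowerSeriesOnBall_ofScalars_of_hasSum one_pos fun _ hz =>
    h.hasSum_negCoeffs (unitDisk_eq_eball ▸ hz)

theorem isNormalized (h : HasNegCoeffSeries a f) : IsNormalized f := by
  refine ⟨unitDisk_eq_eball ▸ h.hasFPowerSeriesOnBall.differentiableOn, ?_, ?_⟩
  · have h0 : HasSum (fun n : ℕ => (a (n + 2) : ℂ) * 0 ^ (n + 2)) 0 := by simp
    simpa using (h 0 (mem_ball_self one_pos)).unique h0
  · simp [h.hasFPowerSeriesOnBall.hasFPowerSeriesAt.deriv, negCoeffs]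

theorem hasSum_apply_sub_mul_deriv (h : HasNegCoeffSeries a f) {z : ℂ} (hz : z ∈ unitDisk) :
    HasSum (fun n : ℕ => ((((n : ℝ) + 1) * a (n + 2) : ℝ) : ℂ) * z ^ (n + 2))
      (f z - z * deriv f z) := by
  have hd := h.hasFPowerSeriesOnBall.hasSum_mul_deriv_ofScalars (unitDisk_eq_eball ▸ hz)
  rw [← hasSum_nat_add_iff' 2] at hd
  have hsum : f z - z * deriv f z
      = -(z * deriv f z - ∑ i ∈ Finset.range 2, (i : ℂ) * negCoeffs a i * z ^ i + (z - f z)) := by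
    simp [Finset.sum_range_succ, negCoeffs]
  rw [hsum]
  refine (hd.add (h z hz)).neg.congr_fun fun n => ?_
  push_cast [negCoeffs]
  ring

theorem hasSum_coeff_mul_pow (h : HasNegCoeffSeries a f) {r : ℝ} (hr0 : 0 ≤ r) (hr1 : r < 1) :
    HasSum (fun n : ℕ => (2 * ((n : ℝ) + 2) - 1) * a (n + 2) * r ^ (n + 2))
      (2 * (f r - r * deriv f r).re + (r - f r).re) := by
  have hP := (hasSum_re_and_eq_ofReal_of_hasSum_ofReal_mul_pow
    (fun z hz => h.hasSum_apply_sub_mul_deriv hz) hr0 hr1).1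
  have hV := (hasSum_re_and_eq_ofReal_of_hasSum_ofReal_mul_pow h hr0 hr1).1
  exact ((hP.mul_left 2).add hV).congr_fun fun n => by ring

theorem apply_ofReal_eq_re (h : HasNegCoeffSeries a f) {r : ℝ} (hr0 : 0 ≤ r) (hr1 : r < 1) :
    f r = (f r).re := by
  have him := congrArg Complex.im (hasSum_re_and_eq_ofReal_of_hasSum_ofReal_mul_pow h hr0 hr1).2
  exact Complex.ext (by simp) (by simpa using him)

theorem re_apply_pos_of_isSP (h : HasNegCoeffSeries a f) (hSP : IsSP f) {r : ℝ}
    (hr : r ∈ Ioo (0 : ℝ) 1) : 0 < (f r).re := by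
  have hmem : ∀ x ∈ Ioo (0 : ℝ) 1, (x : ℂ) ∈ unitDisk := fun x hx =>
    ofReal_mem_unitDisk_s12 hx.1.le hx.2
  have hcont : ContinuousOn (fun x : ℝ => (f x).re) (Ioo 0 1) :=
    Complex.continuous_re.comp_continuousOn
      (hSP.1.1.continuousOn.comp Complex.continuous_ofReal.continuousOn hmem)
  have hderiv : HasDerivAt (fun x : ℝ => (f x).re) 1 0 := by
    simpa using (Complex.ofReal_zero ▸ hSP.1.hasDerivAt_zero).real_of_complex
  refine pos_of_ne_zero_of_deriv_pos hcont (by simp [hSP.1.2.1]) (by simp [hderiv.deriv])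
    (fun x hx hx0 => ?_) r hr
  refine hSP.apply_ne_zero (hmem x hx) (Complex.ofReal_ne_zero.2 hx.1.ne') ?_
  rw [h.apply_ofReal_eq_re hx.1.le hx.2, hx0, Complex.ofReal_zero]

theorem exists_hasSum_lt_of_isSP (h : HasNegCoeffSeries a f) (hSP : IsSP f) {r : ℝ}
    (hr : r ∈ Ioo (0 : ℝ) 1) :
    ∃ s < r, HasSum (fun n : ℕ => (2 * ((n : ℝ) + 2) - 1) * a (n + 2) * r ^ (n + 2)) s := by
  refine ⟨_, ?_, h.hasSum_coeff_mul_pow hr.1.le hr.2⟩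
  set u := (f r).re
  set p := (f r - r * deriv f r).re
  have hu : 0 < u := h.re_apply_pos_of_isSP hSP hr
  have hfu : f r = u := h.apply_ofReal_eq_re hr.1.le hr.2
  have hp : f r - r * deriv f r = p := (hasSum_re_and_eq_ofReal_of_hasSum_ofReal_mul_pow
    (fun z hz => h.hasSum_apply_sub_mul_deriv hz) hr.1.le hr.2).2
  have hw : (r : ℂ) * deriv f r / f r = ((u - p) / u : ℝ) := by
    push_cast
    rw [← hp, ← hfu]
    ring
  have hSPr := hSP.2 r (ofReal_mem_unitDisk_s12 hr.1.le hr.2) (Complex.ofReal_ne_zero.2 hr.1.ne')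
  rw [hw, ← Complex.ofReal_one, ← Complex.ofReal_sub, Complex.norm_real, Complex.ofReal_re,
    Real.norm_eq_abs] at hSPr
  have hhalf : 1 / 2 < (u - p) / u := by linarith [neg_abs_le ((u - p) / u - 1)]
  rw [lt_div_iff₀ hu] at hhalf
  simp only [Complex.sub_re, Complex.ofReal_re]
  linarith

theorem isSP_of_tsum_le (h : HasNegCoeffSeries a f) (ha : ∀ n, 0 ≤ a (n + 2))
    (hs : Summable fun n : ℕ => (2 * ((n : ℝ) + 2) - 1) * a (n + 2))
    (hle : ∑' n : ℕ, (2 * ((n : ℝ) + 2) - 1) * a (n + 2) ≤ 1) : IsSP f := by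
  refine ⟨h.isNormalized, fun z hz hz0 => ?_⟩
  set r := ‖z‖
  have hr0 : 0 < r := norm_pos_iff.2 hz0
  have hr1 : r < 1 := mem_ball_zero_iff.1 hz
  set v := ((r : ℂ) - f r).re
  set p := (f r - r * deriv f r).re
  have hv : ‖z - f z‖ ≤ v := norm_le_re_norm_of_hasSum_ofReal_mul_pow ha h hz
  have hp : ‖f z - z * deriv f z‖ ≤ p :=
    norm_le_re_norm_of_hasSum_ofReal_mul_pow (fun n => mul_nonneg (by positivity) (ha n))
      (fun z hz => h.hasSum_apply_sub_mul_deriv hz) hz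
  have hb : ∀ n : ℕ, 0 ≤ (2 * ((n : ℝ) + 2) - 1) * a (n + 2) := fun n =>
    mul_nonneg (by linarith [n.cast_nonneg (α := ℝ)]) (ha n)
  have hkey : 2 * p + v < r := calc
    2 * p + v ≤ r ^ 2 * ∑' n : ℕ, (2 * ((n : ℝ) + 2) - 1) * a (n + 2) :=
      le_pow_mul_tsum_of_hasSum_mul_pow hb hs hr0.le hr1.le (h.hasSum_coeff_mul_pow hr0.le hr1)
    _ ≤ r ^ 2 := mul_le_of_le_one_right (sq_nonneg r) hle
    _ < r := by nlinarith
  have hfz : r - v ≤ ‖f z‖ := by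
    have := norm_sub_norm_le z (z - f z)
    rw [sub_sub_cancel] at this
    linarith
  have hfz0 : f z ≠ 0 := norm_pos_iff.1 (by linarith [(norm_nonneg _).trans hp])
  apply Complex.norm_sub_one_lt_re_of_norm_sub_one_lt_half
  rw [show z * deriv f z / f z - 1 = -((f z - z * deriv f z) / f z) by field_simp; ring,
    norm_neg, norm_div, div_lt_iff₀ (norm_pos_iff.2 hfz0)]
  linarith

end HasNegCoeffSeries

theorem sp_negative_coefficients_iff_general (a : ℕ → ℝ) (ha : ∀ n, 2 ≤ n → 0 ≤ a n)
    (f : ℂ → ℂ)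
    (hconv : ∀ z ∈ unitDisk, Summable (fun n : ℕ => (a (n + 2) : ℂ) * z ^ (n + 2)))
    (hf : ∀ z ∈ unitDisk, f z = z - ∑' n : ℕ, (a (n + 2) : ℂ) * z ^ (n + 2)) :
    IsSP f ↔
      (Summable (fun n : ℕ => (2 * ((n : ℝ) + 2) - 1) * a (n + 2)) ∧
        ∑' n : ℕ, (2 * ((n : ℝ) + 2) - 1) * a (n + 2) ≤ 1) := by
  have h := HasNegCoeffSeries.of_summable hconv hf
  have ha' : ∀ n, 0 ≤ a (n + 2) := fun n => ha _ le_add_self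
  refine ⟨fun hSP => ?_, fun ⟨hs, hle⟩ => h.isSP_of_tsum_le ha' hs hle⟩
  have hb : ∀ n : ℕ, 0 ≤ (2 * ((n : ℝ) + 2) - 1) * a (n + 2) := fun n =>
    mul_nonneg (by linarith [n.cast_nonneg (α := ℝ)]) (ha' n)
  refine summable_and_tsum_le_of_sum_range_mul_pow_le hb (k := 2) fun r hr N => ?_
  obtain ⟨s, hsr, hs⟩ := h.exists_hasSum_lt_of_isSP hSP hr
  calc ∑ n ∈ Finset.range N, (2 * ((n : ℝ) + 2) - 1) * a (n + 2) * r ^ (n + 2)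
      ≤ s := sum_le_hasSum _ (fun n _ => mul_nonneg (hb n) (pow_nonneg hr.1.le _)) hs
    _ ≤ 1 := hsr.le.trans hr.2.le

/-- a function with negative coefficients is parabolic starlike iff
Σ_{n≥2} (2n−1)aₙ ≤ 1. -/
theorem sp_negative_coefficients_iff (a : ℕ → ℝ) (ha : ∀ n, 2 ≤ n → 0 ≤ a n)
    (f : ℂ → ℂ)
    (hconv : ∀ z ∈ unitDisk, Summable (fun n : ℕ => (a (n + 2) : ℂ) * z ^ (n + 2)))
    (hf : ∀ z ∈ unitDisk, f z = z - ∑' n : ℕ, (a (n + 2) : ℂ) * z ^ (n + 2))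
    (hfd : DifferentiableOn ℂ f unitDisk) :
    IsSP f ↔
      (Summable (fun n : ℕ => (2 * ((n : ℝ) + 2) - 1) * a (n + 2)) ∧
        ∑' n : ℕ, (2 * ((n : ℝ) + 2) - 1) * a (n + 2) ≤ 1) :=
  sp_negative_coefficients_iff_general a ha f hconv hf
end
end

section
/- Let f(z) = z + Σ_{n≥2} aₙ zⁿ be normalized analytic on 𝔻 with Taylor coefficients satisfying Σ_{n≥2} n(n−1)|aₙ| ≤ 1/3. Then f ∈ UCV. -/
open Complex Metric Set

noncomputable section

/-! With `S = ∑ n(n-1)|aₙ| ≤ 1/3`, the Taylor series of `f''` gives `|f''| ≤ S` on the disk, and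
the mean value theorem then `|f'(z) - 1| ≤ S|z| < 1/3`. This makes `f - id` a contraction, so `f` is
injective, and bounds `|f'|` below by `2/3`, so `w = z f''/f'` has `|w| < 1/2`, whence
`Re (1 + w) ≥ 1 - |w| > |w|`. -/

theorem taylorCoeff_deriv (g : ℂ → ℂ) (n : ℕ) :
    taylorCoeff (deriv g) n = (n + 1) * taylorCoeff g (n + 1) := by
  have hn : (n.factorial : ℂ) ≠ 0 := mod_cast n.factorial_ne_zero
  simp only [taylorCoeff, ← iteratedDeriv_succ', Nat.factorial_succ, Nat.cast_mul, Nat.cast_succ]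
  field_simp

theorem norm_taylorCoeff_deriv_deriv (g : ℂ → ℂ) (n : ℕ) :
    ‖taylorCoeff (deriv (deriv g)) n‖ =
      ((n : ℝ) + 2) * ((n : ℝ) + 1) * ‖taylorCoeff g (n + 2)‖ := by
  rw [taylorCoeff_deriv, taylorCoeff_deriv, ← mul_assoc, norm_mul]
  norm_cast
  push_cast
  ring

theorem hasSum_taylorCoeff_mul_pow {g : ℂ → ℂ} (hg : DifferentiableOn ℂ g unitDisk) {z : ℂ}
    (hz : z ∈ unitDisk) : HasSum (fun n => taylorCoeff g n * z ^ n) (g z) := by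
  have hterm : (fun n => taylorCoeff g n * z ^ n) =
      fun n : ℕ => (n.factorial : ℂ)⁻¹ • (z - 0) ^ n • iteratedDeriv n g 0 := by
    ext n
    rw [taylorCoeff, sub_zero, smul_eq_mul, smul_eq_mul]
    ring
  exact hterm ▸ Complex.hasSum_taylorSeries_on_ball hg hz

theorem norm_le_tsum_norm_taylorCoeff {g : ℂ → ℂ} (hg : DifferentiableOn ℂ g unitDisk)
    (hs : Summable fun n => ‖taylorCoeff g n‖) {z : ℂ} (hz : z ∈ unitDisk) :
    ‖g z‖ ≤ ∑' n, ‖taylorCoeff g n‖ := by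
  have hz1 : ‖z‖ ≤ 1 := (mem_ball_zero_iff.mp hz).le
  rw [← (hasSum_taylorCoeff_mul_pow hg hz).tsum_eq]
  refine tsum_of_norm_bounded hs.hasSum fun n => ?_
  rw [norm_mul, norm_pow]
  exact mul_le_of_le_one_right (norm_nonneg _) (pow_le_one₀ (norm_nonneg z) hz1)

theorem injOn_of_norm_deriv_sub_one_le {𝕜 : Type*} [RCLike 𝕜] {f : 𝕜 → 𝕜} {s : Set 𝕜}
    {c : ℝ} (hs : Convex ℝ s) (hf : ∀ z ∈ s, DifferentiableAt 𝕜 f z)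
    (hbound : ∀ z ∈ s, ‖deriv f z - 1‖ ≤ c) (hc : c < 1) : InjOn f s := by
  intro x hx y hy hxy
  have hlip : ‖(f y - y) - (f x - x)‖ ≤ c * ‖y - x‖ := by
    refine hs.norm_image_sub_le_of_norm_deriv_le (f := fun w => f w - w)
      (fun z hz => (hf z hz).fun_sub differentiableAt_fun_id) (fun z hz => ?_) hx hy
    rw [deriv_fun_sub (hf z hz) differentiableAt_fun_id, deriv_id'']
    exact hbound z hz
  rw [hxy, sub_sub_sub_cancel_left, norm_sub_rev] at hlip
  have : ‖y - x‖ = 0 := by nlinarith [norm_nonneg (y - x)]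
  exact (sub_eq_zero.mp (norm_eq_zero.mp this)).symm

theorem norm_div_lt_half_of_norm_sub_one_le {𝕜 : Type*} [NormedField 𝕜] {a c : 𝕜} {t : ℝ}
    (ha : ‖a - 1‖ ≤ t) (hc : ‖c‖ ≤ t) (ht : t < 1 / 3) : ‖c / a‖ < 1 / 2 := by
  have hlow : 1 - t ≤ ‖a‖ := by
    have := norm_sub_norm_le (1 : 𝕜) (1 - a)
    rw [norm_one, sub_sub_cancel, norm_sub_rev] at this
    linarith
  rw [norm_div, div_lt_iff₀ (by linarith)]
  linarith

theorem norm_lt_re_one_add {w : ℂ} (hw : ‖w‖ < 1 / 2) : ‖w‖ < (1 + w).re := by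
  rw [add_re, one_re]
  linarith [neg_le_of_abs_le (abs_re_le_norm w)]

/-- Goodman's coefficient sufficient condition for uniform convexity:
Σ_{n≥2} n(n−1)|aₙ| ≤ 1/3 implies f ∈ UCV. -/
theorem ucv_of_coeff_sum (f : ℂ → ℂ) (hf : IsNormalized f)
    (hsum : Summable (fun n : ℕ =>
      ((n : ℝ) + 2) * ((n : ℝ) + 1) * ‖taylorCoeff f (n + 2)‖))
    (hbd : ∑' n : ℕ,
      ((n : ℝ) + 2) * ((n : ℝ) + 1) * ‖taylorCoeff f (n + 2)‖ ≤ 1 / 3) :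
    IsUCV f := by
  obtain ⟨hdiff, hf0, hf'0⟩ := hf
  set S := ∑' n : ℕ, ((n : ℝ) + 2) * ((n : ℝ) + 1) * ‖taylorCoeff f (n + 2)‖
  have hf' := hdiff.deriv isOpen_ball
  have hcoeff : (fun n => ‖taylorCoeff (deriv (deriv f)) n‖) =
      fun n : ℕ => ((n : ℝ) + 2) * ((n : ℝ) + 1) * ‖taylorCoeff f (n + 2)‖ :=
    funext (norm_taylorCoeff_deriv_deriv f)
  have hf'' : ∀ z ∈ unitDisk, ‖deriv (deriv f) z‖ ≤ S := fun z hz => by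
    simpa only [hcoeff] using norm_le_tsum_norm_taylorCoeff (hf'.deriv isOpen_ball)
      (hcoeff ▸ hsum) hz
  have hf'_sub_one : ∀ z ∈ unitDisk, ‖deriv f z - 1‖ ≤ S * ‖z‖ := fun z hz => by
    simpa only [hf'0, sub_zero] using (convex_ball (0 : ℂ) 1).norm_image_sub_le_of_norm_deriv_le
      (fun w hw => hf'.differentiableAt (isOpen_ball.mem_nhds hw)) hf''
      (mem_ball_self one_pos) hz
  have hSz : ∀ z ∈ unitDisk, S * ‖z‖ < 1 / 3 := fun z hz => by
    have hz1 : ‖z‖ < 1 := mem_ball_zero_iff.mp hz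
    nlinarith [norm_nonneg z]
  refine ⟨⟨hdiff, hf0, hf'0⟩, injOn_of_norm_deriv_sub_one_le (convex_ball 0 1)
    (fun z hz => hdiff.differentiableAt (isOpen_ball.mem_nhds hz))
    (fun z hz => (hf'_sub_one z hz).trans (hSz z hz).le) (by norm_num), fun z hz => ?_⟩
  refine norm_lt_re_one_add (norm_div_lt_half_of_norm_sub_one_le (hf'_sub_one z hz) ?_ (hSz z hz))
  rw [norm_mul, mul_comm]
  exact mul_le_mul_of_nonneg_right (hf'' z hz) (norm_nonneg z)
end
end

section
/- Let a > 1/2 and define R_a = a − 1/2 if 1/2 < a ≤ 3/2, and R_a = √(2a − 2) if a ≥ 3/2. If f is normalized analytic on 𝔻 and |1 + z·f''(z)/f'(z) − a| < R_a for all z ∈ 𝔻, then f ∈ UCV. -/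
open Complex Metric Set

noncomputable section

/-!
The disk `|w - (a - 1)| < R_a` lies in the parabolic region `|w| < 1 + Re w`, which gives the
UCV inequality pointwise; the work is univalence. Put `q = z f''/f'`, with values in the disk
`D(a - 1, R_a)`. At a zero of `f'` of order `m`, `q` behaves like `m z / (z - z₀)`, so `f'` has no
zeros. The Möbius map taking `D(a - 1, R_a)` onto the unit disk turns `q` into a Schwarz function,
which gives `|f''/f'(w)| ≤ (R² - b²) / (R - b |w|)` with `b = |a - 1|`. Integrating along a radius,
`|log f'(z)| ≤ 3/2 < π/2`, so `Re f' > 0` and `f` is univalent (Noshiro–Warschawski).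
-/

open Filter Topology Asymptotics ComplexConjugate

theorem AnalyticAt.eventually_eq_zero_of_isBigO_deriv {g : ℂ → ℂ} {z₀ : ℂ}
    (hg : AnalyticAt ℂ g z₀) (hz₀ : g z₀ = 0) (hO : deriv g =O[𝓝[≠] z₀] g) :
    ∀ᶠ z in 𝓝 z₀, g z = 0 := by
  by_contra hne
  obtain ⟨G, hGa, hG0, hgG⟩ := hg.analyticOrderAt_ne_top.1 (mt analyticOrderAt_eq_top.1 hne)
  obtain ⟨m, hm⟩ : ∃ m, analyticOrderNatAt g z₀ = m + 1 := by
    refine Nat.exists_eq_succ_of_ne_zero fun h0 => hG0 ?_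
    simpa [h0, hz₀] using hgG.self_of_nhds.symm
  rw [hm] at hgG
  set u : ℂ → ℂ := fun z => (m + 1) * G z + (z - z₀) * deriv G z
  have hderiv : ∀ᶠ z in 𝓝 z₀, deriv g z = (z - z₀) ^ m * u z := by
    filter_upwards [hgG.deriv, hGa.eventually_analyticAt] with z hz hGz
    have hpow : HasDerivAt (fun w => (w - z₀) ^ (m + 1)) ((m + 1) * (z - z₀) ^ m) z := by
      simpa using ((hasDerivAt_id z).sub_const z₀).fun_pow (m + 1)
    simp only [smul_eq_mul] at hz
    rw [hz, (hpow.fun_mul hGz.differentiableAt.hasDerivAt).deriv]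
    ring
  obtain ⟨C, hC⟩ := hO.bound
  -- Dividing `‖g'‖ ≤ C ‖g‖` by `‖z - z₀‖ ^ m` leaves a bound on `u` that tends to `0` at `z₀`.
  have hu : ∀ᶠ z in 𝓝[≠] z₀, ‖u z‖ ≤ C * (‖z - z₀‖ * ‖G z‖) := by
    filter_upwards [hC, nhdsWithin_le_nhds hderiv, nhdsWithin_le_nhds hgG,
      self_mem_nhdsWithin] with z hCz hdz hgz hz
    have hpos : 0 < ‖z - z₀‖ ^ m := pow_pos (norm_pos_iff.2 (sub_ne_zero.2 hz)) m
    rw [hdz, hgz, norm_mul, norm_smul, norm_pow, norm_pow] at hCz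
    refine le_of_mul_le_mul_left ?_ hpos
    calc ‖z - z₀‖ ^ m * ‖u z‖ ≤ C * (‖z - z₀‖ ^ (m + 1) * ‖G z‖) := hCz
      _ = ‖z - z₀‖ ^ m * (C * (‖z - z₀‖ * ‖G z‖)) := by ring
  have hu_cont : ContinuousAt u z₀ :=
    (continuousAt_const.mul hGa.continuousAt).add
      ((continuousAt_id.sub continuousAt_const).mul hGa.deriv.continuousAt)
  have hlim : ‖u z₀‖ ≤ C * (‖z₀ - z₀‖ * ‖G z₀‖) :=
    le_of_tendsto_of_tendsto
      (hu_cont.norm.tendsto.mono_left nhdsWithin_le_nhds)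
      (((continuousAt_const.mul ((continuousAt_id.sub continuousAt_const).norm.mul
        hGa.continuousAt.norm)).tendsto).mono_left nhdsWithin_le_nhds) hu
  have hm1 : (m + 1 : ℂ) ≠ 0 := by exact_mod_cast Nat.succ_ne_zero m
  simp only [u, sub_self, zero_mul, add_zero, norm_zero, mul_zero, norm_mul] at hlim
  linarith [mul_pos (norm_pos_iff.2 hm1) (norm_pos_iff.2 hG0)]

theorem ne_zero_of_norm_mul_logDeriv_le {g : ℂ → ℂ} {r K : ℝ}
    (hg : AnalyticOnNhd ℂ g (ball 0 r)) (hg0 : g 0 ≠ 0)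
    (hK : ∀ z ∈ ball 0 r, ‖z * logDeriv g z‖ ≤ K) {z : ℂ} (hz : z ∈ ball 0 r) : g z ≠ 0 := by
  intro hgz
  rcases (hg z hz).eventually_eq_zero_or_eventually_ne_zero with hzero | hne
  · exact hg0 (hg.eqOn_zero_of_preconnected_of_eventuallyEq_zero
      (convex_ball 0 r).isPreconnected hz hzero (mem_ball_self (pos_of_mem_ball hz)))
  have hz0 : 0 < ‖z‖ := norm_pos_iff.2 fun h => hg0 (h ▸ hgz)
  have hnear : ∀ᶠ w in 𝓝 z, ‖z‖ / 2 ≤ ‖w‖ :=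
    continuous_norm.continuousAt.eventually_const_le (half_lt_self hz0)
  have hO : deriv g =O[𝓝[≠] z] g := by
    refine IsBigO.of_bound (2 * K / ‖z‖) ?_
    filter_upwards [hne, nhdsWithin_le_nhds (isOpen_ball.mem_nhds hz),
      nhdsWithin_le_nhds hnear] with w hgw hw hwz
    have hlog : ‖w‖ * ‖deriv g w‖ = ‖w * logDeriv g w‖ * ‖g w‖ := by
      rw [logDeriv_apply, ← norm_mul, ← norm_mul, mul_assoc, div_mul_cancel₀ _ hgw]
    rw [div_mul_eq_mul_div, le_div_iff₀ hz0]
    nlinarith [hK w hw, norm_nonneg (deriv g w), norm_nonneg (g w)]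
  obtain ⟨w, hw0, hw⟩ := (((hg z hz).eventually_eq_zero_of_isBigO_deriv hgz hO).filter_mono
    nhdsWithin_le_nhds |>.and hne).exists
  exact hw hw0

theorem norm_le_of_mapsTo_ball {q : ℂ → ℂ} {c : ℂ} {R : ℝ}
    (hq : DifferentiableOn ℂ q (ball 0 1)) (hq0 : q 0 = 0)
    (hmaps : MapsTo q (ball 0 1) (ball c R)) {z : ℂ} (hz : z ∈ ball 0 1) :
    ‖q z‖ ≤ (R ^ 2 - ‖c‖ ^ 2) * ‖z‖ / (R - ‖c‖ * ‖z‖) := by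
  have hcR : ‖c‖ < R := by simpa [hq0] using hmaps (mem_ball_self one_pos)
  have hz1 : ‖z‖ < 1 := mem_ball_zero_iff.1 hz
  have hRc : 0 < R ^ 2 - ‖c‖ ^ 2 := by nlinarith [norm_nonneg c]
  set den : ℂ → ℂ := fun w => ((R ^ 2 - ‖c‖ ^ 2 : ℝ) : ℂ) + conj c * q w
  -- `ψ` is `q` followed by the Möbius map sending `ball c R` onto the unit disk and `0` to `0`.
  set ψ : ℂ → ℂ := fun w => R * q w / den w
  have hden : ∀ w ∈ ball (0 : ℂ) 1, R * ‖q w‖ < ‖den w‖ := by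
    intro w hw
    have hid : ‖den w‖ ^ 2 - R ^ 2 * ‖q w‖ ^ 2 = (R ^ 2 - ‖c‖ ^ 2) * (R ^ 2 - ‖q w - c‖ ^ 2) := by
      simp only [den, Complex.sq_norm, Complex.normSq_apply, Complex.add_re, Complex.add_im,
        Complex.mul_re, Complex.mul_im, Complex.conj_re, Complex.conj_im, Complex.ofReal_re,
        Complex.ofReal_im, Complex.sub_re, Complex.sub_im]
      ring
    have hqw : ‖q w - c‖ < R := mem_ball_iff_norm.1 (hmaps hw)
    have hR : 0 < R := (norm_nonneg c).trans_lt hcR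
    refine pow_lt_pow_iff_left₀ (by positivity) (norm_nonneg _) two_ne_zero |>.1 ?_
    nlinarith [mul_pos hRc (by nlinarith [norm_nonneg (q w - c)] : 0 < R ^ 2 - ‖q w - c‖ ^ 2)]
  have hden0 : ∀ w ∈ ball (0 : ℂ) 1, den w ≠ 0 := fun w hw =>
    norm_pos_iff.1 ((mul_nonneg ((norm_nonneg c).trans hcR.le) (norm_nonneg _)).trans_lt
      (hden w hw))
  have hψ : ‖ψ z‖ ≤ ‖z‖ := by
    refine Complex.norm_le_norm_of_mapsTo_ball ?_ ?_ (by simp [ψ, hq0]) hz1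
    · exact (hq.const_mul _).div ((hq.const_mul _).const_add _) hden0
    · intro w hw
      rw [mem_closedBall_zero_iff, norm_div, norm_mul, Complex.norm_real, Real.norm_eq_abs,
        abs_of_pos ((norm_nonneg c).trans_lt hcR)]
      exact div_le_one_of_le₀ (hden w hw).le (norm_nonneg _)
  have hinv : q z * (R - conj c * ψ z) = (R ^ 2 - ‖c‖ ^ 2 : ℝ) * ψ z := by
    have := div_mul_cancel₀ (R * q z) (hden0 z hz)
    simp only [ψ, den] at this ⊢
    linear_combination -this
  have hlow : R - ‖c‖ * ‖z‖ ≤ ‖(R : ℂ) - conj c * ψ z‖ := by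
    calc R - ‖c‖ * ‖z‖ ≤ ‖(R : ℂ)‖ - ‖conj c * ψ z‖ := by
          rw [norm_mul, Complex.norm_conj, Complex.norm_real, Real.norm_eq_abs]
          gcongr
          exact le_abs_self R
      _ ≤ _ := norm_sub_norm_le _ _
  rw [le_div_iff₀ (by nlinarith [norm_nonneg c, norm_nonneg z])]
  calc ‖q z‖ * (R - ‖c‖ * ‖z‖) ≤ ‖q z * (R - conj c * ψ z)‖ := by
        rw [norm_mul]; gcongr
    _ = (R ^ 2 - ‖c‖ ^ 2) * ‖ψ z‖ := by
        rw [hinv, norm_mul, Complex.norm_real, Real.norm_eq_abs, abs_of_pos hRc]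
    _ ≤ (R ^ 2 - ‖c‖ ^ 2) * ‖z‖ := by gcongr

theorem ofReal_mul_mem_ball_zero {r t : ℝ} {z : ℂ} (hz : z ∈ ball 0 r) (ht : t ∈ Icc (0 : ℝ) 1) :
    (t : ℂ) * z ∈ ball 0 r := by
  rw [mem_ball_zero_iff, norm_mul, Complex.norm_real, Real.norm_of_nonneg ht.1]
  exact (mul_le_of_le_one_left (norm_nonneg z) ht.2).trans_lt (mem_ball_zero_iff.1 hz)

theorem eq_mul_exp_integral_logDeriv {g : ℂ → ℂ} {r : ℝ} (hg : DifferentiableOn ℂ g (ball 0 r))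
    (hne : ∀ w ∈ ball 0 r, g w ≠ 0) {z : ℂ} (hz : z ∈ ball 0 r) :
    g z = g 0 * exp (∫ t in (0 : ℝ)..1, z * logDeriv g (t * z)) := by
  have hlog : DifferentiableOn ℂ (logDeriv g) (ball 0 r) :=
    ((hg.analyticOnNhd isOpen_ball).deriv.differentiableOn).div hg hne
  obtain ⟨L, hL⟩ := hlog.isExactOn_ball
  have h0 : (0 : ℂ) ∈ ball 0 r := mem_ball_self (pos_of_mem_ball hz)
  have hconst : g z * exp (-L z) = g 0 * exp (-L 0) := by
    refine isOpen_ball.is_const_of_deriv_eq_zero (convex_ball 0 r).isPreconnected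
      (fun w hw => ((hg w hw).differentiableAt (isOpen_ball.mem_nhds hw)).mul
        (hL w hw).differentiableAt.neg.cexp |>.differentiableWithinAt) (fun w hw => ?_) hz h0
    have hgw := ((hg w hw).differentiableAt (isOpen_ball.mem_nhds hw)).hasDerivAt
    rw [(hgw.mul (hL w hw).neg.cexp).deriv, logDeriv_apply, Pi.zero_apply]
    field_simp [hne w hw]
    ring
  have hftc : ∫ t in (0 : ℝ)..1, z * logDeriv g (t * z) = L z - L 0 := by
    have hsub : MapsTo (fun t : ℝ => (t : ℂ) * z) (uIcc 0 1) (ball 0 r) := fun t ht =>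
      ofReal_mul_mem_ball_zero hz (uIcc_of_le (zero_le_one (α := ℝ)) ▸ ht)
    have hcont : Continuous fun t : ℝ => (t : ℂ) * z := by fun_prop
    simpa using intervalIntegral.integral_eq_sub_of_hasDerivAt (f := fun t : ℝ => L (t * z))
      (fun t ht => by
        simpa [mul_comm] using (((hL _ (hsub ht)).comp (t : ℂ)
          ((hasDerivAt_id (t : ℂ)).mul_const z)).comp_ofReal))
      ((continuousOn_const.mul (hlog.continuousOn.comp hcont.continuousOn hsub)).intervalIntegrable)
  calc g z = g z * exp (-L z) * exp (L z) := by
        rw [mul_assoc, ← exp_add, neg_add_cancel, exp_zero, mul_one]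
    _ = _ := by
        rw [hconst, hftc, exp_sub, exp_neg]
        field_simp

theorem div_sub_mul_le_quadratic {R b t : ℝ} (hb : 0 ≤ b) (hbR : b < R) (ht : t ≤ 1) :
    (R ^ 2 - b ^ 2) / (R - b * t)
      ≤ (R ^ 2 - b ^ 2) / R + (R ^ 2 - b ^ 2) * b / R ^ 2 * t
        + (R + b) * b ^ 2 / R ^ 2 * t ^ 2 := by
  have hR : 0 < R := hb.trans_lt hbR
  have hRt : 0 < R - b * t := by nlinarith
  have key : ((R ^ 2 - b ^ 2) / R + (R ^ 2 - b ^ 2) * b / R ^ 2 * t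
      + (R + b) * b ^ 2 / R ^ 2 * t ^ 2) * (R - b * t)
      = R ^ 2 - b ^ 2 + (R + b) * b ^ 3 * t ^ 2 * (1 - t) / R ^ 2 := by
    field_simp
    ring
  rw [div_le_iff₀ hRt, key, le_add_iff_nonneg_right]
  have : 0 ≤ 1 - t := sub_nonneg.2 ht
  have : 0 ≤ R + b := by linarith
  positivity

theorem integral_quadratic (A B C : ℝ) :
    ∫ t in (0 : ℝ)..1, (A + B * t + C * t ^ 2) = A + B / 2 + C / 3 := by
  rw [intervalIntegral.integral_add (Continuous.intervalIntegrable (by fun_prop) _ _)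
      (Continuous.intervalIntegrable (by fun_prop) _ _),
    intervalIntegral.integral_add (Continuous.intervalIntegrable (by fun_prop) _ _)
      (Continuous.intervalIntegrable (by fun_prop) _ _),
    intervalIntegral.integral_const_mul, intervalIntegral.integral_const_mul, integral_id,
    integral_pow, intervalIntegral.integral_const]
  norm_num
  ring

-- `∫₀¹` of the quadratic majorant of `(R ^ 2 - b ^ 2) / (R - b t)` from `div_sub_mul_le_quadratic`.
def logDerivIntegralBound (R b : ℝ) : ℝ :=
  (R ^ 2 - b ^ 2) / R + (R ^ 2 - b ^ 2) * b / R ^ 2 / 2 + (R + b) * b ^ 2 / R ^ 2 / 3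

theorem norm_integral_logDeriv_le {g : ℂ → ℂ} {c : ℂ} {R : ℝ}
    (hg : DifferentiableOn ℂ g (ball 0 1)) (hne : ∀ w ∈ ball 0 1, g w ≠ 0)
    (hmaps : MapsTo (fun w => w * logDeriv g w) (ball 0 1) (ball c R)) {z : ℂ}
    (hz : z ∈ ball 0 1) :
    ‖∫ t in (0 : ℝ)..1, z * logDeriv g (t * z)‖
      ≤ logDerivIntegralBound R ‖c‖ := by
  have hq : DifferentiableOn ℂ (fun w => w * logDeriv g w) (ball 0 1) :=
    differentiableOn_id.mul (((hg.analyticOnNhd isOpen_ball).deriv.differentiableOn).div hg hne)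
  have hcR : ‖c‖ < R := by simpa using hmaps (mem_ball_self one_pos)
  have hz1 : ‖z‖ < 1 := mem_ball_zero_iff.1 hz
  rw [logDerivIntegralBound, ← integral_quadratic]
  refine intervalIntegral.norm_integral_le_of_norm_le zero_le_one
    (Eventually.of_forall fun t ht => ?_) (Continuous.intervalIntegrable (by fun_prop) _ _)
  refine le_trans ?_ (div_sub_mul_le_quadratic (norm_nonneg c) hcR ht.2)
  have hS := norm_le_of_mapsTo_ball hq (by simp) hmaps
    (ofReal_mul_mem_ball_zero hz (Ioc_subset_Icc_self ht))
  set X := ‖z * logDeriv g (t * z)‖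
  have htz : ‖(t : ℂ) * z‖ = t * ‖z‖ := by
    rw [norm_mul, Complex.norm_real, Real.norm_of_nonneg ht.1.le]
  have hX : ‖(t : ℂ) * z * logDeriv g (t * z)‖ = t * X := by
    rw [mul_assoc, norm_mul, Complex.norm_real, Real.norm_of_nonneg ht.1.le]
  have hct : ‖c‖ * t ≤ ‖c‖ := mul_le_of_le_one_right (norm_nonneg c) ht.2
  have hctz : ‖c‖ * (t * ‖z‖) ≤ ‖c‖ * t :=
    mul_le_mul_of_nonneg_left (mul_le_of_le_one_right ht.1.le hz1.le) (norm_nonneg c)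
  rw [hX, htz, le_div_iff₀ (by nlinarith)] at hS
  have hXs : X * (R - ‖c‖ * (t * ‖z‖)) ≤ (R ^ 2 - ‖c‖ ^ 2) * ‖z‖ :=
    le_of_mul_le_mul_left (by linarith) ht.1
  rw [le_div_iff₀ (by linarith)]
  calc X * (R - ‖c‖ * t) ≤ X * (R - ‖c‖ * (t * ‖z‖)) := by
        gcongr
    _ ≤ (R ^ 2 - ‖c‖ ^ 2) * ‖z‖ := hXs
    _ ≤ R ^ 2 - ‖c‖ ^ 2 := mul_le_of_le_one_right (by nlinarith [norm_nonneg c]) hz1.le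

theorem Convex.injOn_of_re_deriv_pos {f : ℂ → ℂ} {U : Set ℂ} (hU : Convex ℝ U) (hUo : IsOpen U)
    (hf : DifferentiableOn ℂ f U) (hre : ∀ z ∈ U, 0 < (deriv f z).re) : InjOn f U := by
  intro z₁ h₁ z₂ h₂ heq
  by_contra hne
  set d := z₂ - z₁
  have hseg : ∀ t ∈ Icc (0 : ℝ) 1, z₁ + t * d ∈ U := fun t ht => by
    simpa [Complex.real_smul] using hU.add_smul_sub_mem h₁ h₂ ht
  -- `t ↦ Re (conj d * f (z₁ + t d))` is strictly increasing, yet equal at `0` and `1`.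
  have hF : ∀ t ∈ Icc (0 : ℝ) 1, HasDerivAt (fun t : ℝ => (conj d * f (z₁ + t * d)).re)
      (‖d‖ ^ 2 * (deriv f (z₁ + t * d)).re) t := by
    intro t ht
    have hft := ((hf _ (hseg t ht)).differentiableAt (hUo.mem_nhds (hseg t ht))).hasDerivAt
    have := ((hft.comp (t : ℂ) (((hasDerivAt_id (t : ℂ)).mul_const d).const_add z₁)).const_mul
      (conj d)).real_of_complex
    convert this using 1
    · simp
    · rw [one_mul, mul_left_comm, Complex.conj_mul', ← Complex.ofReal_pow, Complex.re_mul_ofReal,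
        mul_comm]
  obtain ⟨t, ht, hslope⟩ := exists_hasDerivAt_eq_slope _ _ zero_lt_one
    (fun t ht => (hF t ht).continuousAt.continuousWithinAt)
    (fun t ht => hF t (Ioo_subset_Icc_self ht))
  have hd : 0 < ‖d‖ := norm_pos_iff.2 (sub_ne_zero.2 (Ne.symm hne))
  have := mul_pos (pow_pos hd 2) (hre _ (hseg t (Ioo_subset_Icc_self ht)))
  rw [Complex.ofReal_one, one_mul, add_sub_cancel, Complex.ofReal_zero, zero_mul, add_zero, heq,
    sub_self, zero_div] at hslope
  exact this.ne' hslope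

def ucvRadius (a : ℝ) : ℝ := if a ≤ 3 / 2 then a - 1 / 2 else √(2 * a - 2)

theorem norm_lt_re_of_norm_sub_lt_ucvRadius {a : ℝ} {w : ℂ} (hw : ‖1 + w - a‖ < ucvRadius a) :
    ‖w‖ < (1 + w).re := by
  have hdisk : (1 + w.re - a) ^ 2 + w.im ^ 2 < ucvRadius a ^ 2 := by
    have := pow_lt_pow_left₀ hw (norm_nonneg _) two_ne_zero
    rw [Complex.sq_norm, Complex.normSq_apply, ← sq, ← sq] at this
    simpa using this
  have hparab : w.im ^ 2 < 1 + 2 * w.re := by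
    unfold ucvRadius at hw hdisk
    split_ifs at hw hdisk with ha
    · have : 0 < a - 1 / 2 := (norm_nonneg _).trans_lt hw
      have : -(1 / 2) < w.re := by nlinarith [sq_nonneg w.im]
      nlinarith [sq_nonneg w.im]
    · rw [Real.sq_sqrt (by linarith)] at hdisk
      nlinarith [sq_nonneg (w.re - a + 2)]
  have hre : 0 < 1 + w.re := by nlinarith [sq_nonneg w.im]
  rw [Complex.add_re, Complex.one_re, ← pow_lt_pow_iff_left₀ (norm_nonneg w) hre.le two_ne_zero,
    Complex.sq_norm, Complex.normSq_apply]
  nlinarith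

theorem logDerivIntegralBound_le_add {R b : ℝ} (hb : 0 ≤ b) (hbR : b < R) :
    logDerivIntegralBound R b ≤ R + b := by
  have hR : 0 < R := hb.trans_lt hbR
  have key : logDerivIntegralBound R b = (R + b) * (R ^ 2 - R * b / 2 - b ^ 2 / 6) / R ^ 2 := by
    unfold logDerivIntegralBound
    field_simp
    ring
  rw [key, div_le_iff₀ (by positivity)]
  nlinarith [mul_nonneg (add_nonneg hR.le hb) (add_nonneg (mul_nonneg hR.le hb) (sq_nonneg b))]

theorem logDerivIntegralBound_ucvRadius_le {a : ℝ} (ha : |a - 1| < ucvRadius a) :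
    logDerivIntegralBound (ucvRadius a) |a - 1| ≤ 3 / 2 := by
  unfold ucvRadius at ha ⊢
  split_ifs at ha ⊢ with h
  · refine (logDerivIntegralBound_le_add (abs_nonneg _) ha).trans ?_
    cases abs_cases (a - 1) <;> linarith
  · set R := √(2 * a - 2)
    have hR2 : R ^ 2 = 2 * a - 2 := Real.sq_sqrt (by linarith)
    have hR : 1 < R := by nlinarith [Real.sqrt_nonneg (2 * a - 2)]
    rw [abs_of_pos (by linarith), show a - 1 = R ^ 2 / 2 by linarith]
    have key : logDerivIntegralBound R (R ^ 2 / 2) = R + R ^ 2 / 4 - R ^ 3 / 6 - R ^ 4 / 48 := by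
      unfold logDerivIntegralBound
      field_simp
      ring
    -- the quartic peaks at about `1.43`, near `R = 1.7`
    rw [key]
    nlinarith [sq_nonneg (R - 17 / 10), sq_nonneg (R ^ 2 - 3)]

theorem re_pos_of_mapsTo_ball {g : ℂ → ℂ} {c : ℂ} {R : ℝ}
    (hg : DifferentiableOn ℂ g (ball 0 1)) (hg0 : g 0 = 1)
    (hmaps : MapsTo (fun w => w * logDeriv g w) (ball 0 1) (ball c R))
    (hbound : logDerivIntegralBound R ‖c‖ < Real.pi / 2) {z : ℂ} (hz : z ∈ ball 0 1) :
    0 < (g z).re := by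
  have hne : ∀ w ∈ ball (0 : ℂ) 1, g w ≠ 0 := fun w hw =>
    ne_zero_of_norm_mul_logDeriv_le (hg.analyticOnNhd isOpen_ball) (hg0 ▸ one_ne_zero)
      (fun v hv => (norm_le_norm_add_norm_sub' _ c).trans
        (add_le_add_right (mem_ball_iff_norm.1 (hmaps hv)).le _)) hw
  rw [eq_mul_exp_integral_logDeriv hg hne hz, hg0, one_mul, Complex.exp_re]
  refine mul_pos (Real.exp_pos _) (Real.cos_pos_of_mem_Ioo (abs_lt.1 ?_))
  exact (Complex.abs_im_le_norm _).trans_lt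
    ((norm_integral_logDeriv_le hg hne hmaps hz).trans_lt hbound)

theorem ucv_of_disk_condition_general (a : ℝ) (f : ℂ → ℂ)
    (hf : IsNormalized f)
    (h : ∀ z ∈ unitDisk,
      ‖1 + z * deriv (deriv f) z / deriv f z - (a : ℂ)‖
        < if a ≤ 3 / 2 then a - 1 / 2 else Real.sqrt (2 * a - 2)) :
    IsUCV f := by
  obtain ⟨hfd, hf0, hf1⟩ := hf
  have hmaps : MapsTo (fun z => z * logDeriv (deriv f) z) (ball 0 1)
      (ball ((a - 1 : ℝ) : ℂ) (ucvRadius a)) := fun z hz => by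
    have hshift : z * logDeriv (deriv f) z - ((a - 1 : ℝ) : ℂ)
        = 1 + z * deriv (deriv f) z / deriv f z - a := by
      rw [logDeriv_apply, mul_div_assoc]
      push_cast
      ring
    rw [mem_ball_iff_norm, hshift]
    exact h z hz
  have hc : ‖((a - 1 : ℝ) : ℂ)‖ = |a - 1| := by rw [Complex.norm_real, Real.norm_eq_abs]
  have hcR : |a - 1| < ucvRadius a := by
    simpa only [mem_ball_iff_norm', zero_mul, sub_zero, hc] using hmaps (mem_ball_self one_pos)
  have hre : ∀ z ∈ ball (0 : ℂ) 1, 0 < (deriv f z).re := fun z hz =>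
    re_pos_of_mapsTo_ball ((hfd.analyticOnNhd isOpen_ball).deriv.differentiableOn) hf1 hmaps
      (by linarith [hc ▸ logDerivIntegralBound_ucvRadius_le hcR, Real.pi_gt_three]) hz
  exact ⟨⟨hfd, hf0, hf1⟩, (convex_ball 0 1).injOn_of_re_deriv_pos isOpen_ball hfd hre,
    fun z hz => norm_lt_re_of_norm_sub_lt_ucvRadius (h z hz)⟩

/-- circular-region sufficient condition for uniform convexity. -/
theorem ucv_of_disk_condition (a : ℝ) (ha : 1 / 2 < a) (f : ℂ → ℂ)
    (hf : IsNormalized f)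
    (h : ∀ z ∈ unitDisk,
      ‖1 + z * deriv (deriv f) z / deriv f z - (a : ℂ)‖
        < if a ≤ 3 / 2 then a - 1 / 2 else Real.sqrt (2 * a - 2)) :
    IsUCV f :=
  ucv_of_disk_condition_general a f hf h
end
end

section
/- Let k ≥ 0 and let f be normalized analytic and univalent on 𝔻. Then Re(1 + (z − ζ)·f''(z)/f'(z)) ≥ 0 for all z ∈ 𝔻 and all ζ ∈ ℂ with |ζ| ≤ k if and only if Re(1 + z·f''(z)/f'(z)) > k·|z·f''(z)/f'(z)| for all z ∈ 𝔻. (These are the two analytic characterizations of k-uniformly convex functions.) -/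
open Complex Metric Set

noncomputable section

/-!
Write `a = f''/f'` and `p(z) = 1 + z a(z)`. Either side gives `Re p ≥ 0` on the disk, and this
already excludes zeros of `f'`: at a zero `w₀` of order `n`, `(w - w₀) a(w) → n`, so
`Re p(t w₀) ≈ n t/(t - 1) → -∞` as `t → 1⁻`. Hence `a` is holomorphic, and the minimum principle
for real parts (the maximum modulus principle for `exp (-F)`) does the rest. Taking
`ζ = k ā(z)/|a(z)|` turns the two-variable condition into `k |a(z)| ≤ Re p(z)`, and since
`Re p > 0` this gives `k |z a(z)| ≤ |z| Re p(z) < Re p(z)`. Conversely, on the circle `|w| = t`,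
`Re (1 + (w - tζ) a(w)) ≥ Re p(w) - k |w a(w)| > 0`; the minimum principle carries this to
`|z| < t`, and `t → 1` finishes.
-/

open Filter Topology

namespace Complex

lemma re_nonneg_of_forall_mem_frontier_re_nonneg {F : ℂ → ℂ} {U : Set ℂ}
    (hU : Bornology.IsBounded U) (hF : DiffContOnCl ℂ F U)
    (hfr : ∀ w ∈ frontier U, 0 ≤ (F w).re) {z : ℂ} (hz : z ∈ closure U) : 0 ≤ (F z).re := by
  have hexp : DiffContOnCl ℂ (fun w => exp (-F w)) U :=
    ⟨hF.differentiableOn.neg.cexp, hF.continuousOn.neg.cexp⟩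
  simpa [norm_exp] using norm_le_of_forall_mem_frontier_norm_le hU hexp (C := 1)
    (fun w hw => by simpa [norm_exp] using hfr w hw) hz

lemma re_pos_of_re_nonneg_of_re_pos {F : ℂ → ℂ} {U : Set ℂ} (hUc : IsPreconnected U)
    (hUo : IsOpen U) (hF : DifferentiableOn ℂ F U) (hnonneg : ∀ z ∈ U, 0 ≤ (F z).re) {c : ℂ}
    (hc : c ∈ U) (hpos : 0 < (F c).re) {z : ℂ} (hz : z ∈ U) : 0 < (F z).re := by
  by_contra! hz0
  have hmax : IsMaxOn (norm ∘ fun w => exp (-F w)) U z := fun w hw => by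
    simp only [mem_ofPred_eq, Function.comp_apply, norm_exp, neg_re, Real.exp_le_exp]
    linarith [hnonneg w hw]
  have := norm_eqOn_of_isPreconnected_of_isMaxOn hUc hUo hF.neg.cexp hz hmax hc
  simp only [Function.comp_apply, norm_exp, Pi.neg_apply, neg_re, Function.const_apply,
    Real.exp_eq_exp, neg_inj] at this
  linarith

lemma exists_norm_le_re_mul_eq {k : ℝ} (hk : 0 ≤ k) (a : ℂ) :
    ∃ ζ : ℂ, ‖ζ‖ ≤ k ∧ (ζ * a).re = k * ‖a‖ := by
  rcases eq_or_ne a 0 with rfl | ha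
  · exact ⟨0, by simpa using hk, by simp⟩
  refine ⟨k * (starRingEnd ℂ) a / ‖a‖, ?_, ?_⟩
  · rw [norm_div, norm_mul, norm_conj, norm_real, norm_real, Real.norm_of_nonneg hk, norm_norm,
      mul_div_assoc, div_self (norm_ne_zero_iff.mpr ha), mul_one]
  · have : k * (starRingEnd ℂ) a / ‖a‖ * a = (k * ‖a‖ : ℝ) := by
      rw [mul_div_right_comm, mul_assoc, conj_mul']
      push_cast
      field_simp
    rw [this, ofReal_re]

end Complex

lemma AnalyticAt.exists_tendsto_sub_mul_logDeriv {𝕜 : Type*} [NontriviallyNormedField 𝕜]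
    [CompleteSpace 𝕜] {h : 𝕜 → 𝕜} {w₀ : 𝕜} (hh : AnalyticAt 𝕜 h w₀) (hzero : h w₀ = 0)
    (hne : ¬ ∀ᶠ w in 𝓝 w₀, h w = 0) :
    ∃ n : ℕ, 0 < n ∧ Tendsto (fun w => (w - w₀) * logDeriv h w) (𝓝[≠] w₀) (𝓝 n) := by
  obtain ⟨n, g, hg, hgw₀, hev⟩ := hh.exists_eventuallyEq_pow_smul_nonzero_iff.mpr hne
  have hn : 0 < n := by
    refine Nat.pos_of_ne_zero fun hn => hgw₀ ?_
    simpa [hn, hzero] using hev.self_of_nhds.symm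
  replace hev : h =ᶠ[𝓝 w₀] fun w => (w - w₀) ^ n * g w := hev.mono fun w hw => by simpa using hw
  refine ⟨n, hn, ?_⟩
  have hlogDeriv : ∀ᶠ w in 𝓝[≠] w₀, (w - w₀) * logDeriv h w = n + (w - w₀) * logDeriv g w := by
    filter_upwards [nhdsWithin_le_nhds hev.eventuallyEq_nhds,
      nhdsWithin_le_nhds (hg.continuousAt.eventually_ne hgw₀),
      nhdsWithin_le_nhds hg.eventually_analyticAt, self_mem_nhdsWithin] with w hw hgw hgan hww₀
    have hsub : w - w₀ ≠ 0 := sub_ne_zero.mpr hww₀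
    rw [(logDeriv_congr_nhds hw).eq_of_nhds,
      logDeriv_mul (f := fun w => (w - w₀) ^ n) w (pow_ne_zero _ hsub) hgw (by fun_prop)
        hgan.differentiableAt,
      logDeriv_fun_pow (by fun_prop), logDeriv_apply, deriv_sub_const, deriv_id'']
    field_simp
  refine Tendsto.congr' (EventuallyEq.symm hlogDeriv) ?_
  have hcont : ContinuousAt (fun w => (n : 𝕜) + (w - w₀) * logDeriv g w) w₀ :=
    continuousAt_const.add ((continuousAt_id.sub continuousAt_const).mul
      (hg.deriv.continuousAt.div hg.continuousAt hgw₀))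
  simpa using hcont.tendsto.mono_left nhdsWithin_le_nhds

lemma tendsto_div_sub_one_nhdsLT_one : Tendsto (fun t : ℝ => t / (t - 1)) (𝓝[<] 1) atBot := by
  have hsub : Tendsto (fun t : ℝ => t - 1) (𝓝[<] 1) (𝓝[<] 0) := by
    refine tendsto_nhdsWithin_of_tendsto_nhds_of_eventually_within _ ?_ ?_
    · exact ((show Continuous fun t : ℝ => t - 1 by fun_prop).tendsto' 1 0 (by simp)).mono_left
        nhdsWithin_le_nhds
    · filter_upwards [self_mem_nhdsWithin] with t ht
      simpa using ht
  exact (tendsto_id.mono_left nhdsWithin_le_nhds).pos_mul_atBot one_pos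
    (tendsto_inv_nhdsLT_zero.comp hsub)

lemma ne_zero_of_re_one_add_mul_logDeriv_nonneg {h : ℂ → ℂ} (hh : AnalyticOnNhd ℂ h unitDisk)
    (h0 : h 0 ≠ 0) (hre : ∀ w ∈ unitDisk, 0 ≤ (1 + w * logDeriv h w).re) {w₀ : ℂ}
    (hw₀ : w₀ ∈ unitDisk) : h w₀ ≠ 0 := by
  intro hzero
  have hw₀0 : w₀ ≠ 0 := by rintro rfl; exact h0 hzero
  have hne : ¬ ∀ᶠ w in 𝓝 w₀, h w = 0 := fun hev =>
    h0 (hh.eqOn_zero_of_preconnected_of_eventuallyEq_zero (convex_ball 0 1).isPreconnected hw₀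
      hev (mem_ball_self one_pos))
  obtain ⟨n, hn, hlim⟩ := (hh w₀ hw₀).exists_tendsto_sub_mul_logDeriv hzero hne
  have hray : Tendsto (fun t : ℝ => (t : ℂ) * w₀) (𝓝[<] 1) (𝓝[≠] w₀) := by
    refine tendsto_nhdsWithin_of_tendsto_nhds_of_eventually_within _ ?_ ?_
    · exact ((show Continuous fun t : ℝ => (t : ℂ) * w₀ by fun_prop).tendsto' 1 w₀
        (by simp)).mono_left nhdsWithin_le_nhds
    · filter_upwards [self_mem_nhdsWithin] with t ht
      simpa [hw₀0] using ht.ne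
  have hbot : Tendsto (fun t : ℝ => (1 + t * w₀ * logDeriv h (t * w₀)).re) (𝓝[<] 1) atBot := by
    refine (tendsto_atBot_add_const_left _ 1 (tendsto_div_sub_one_nhdsLT_one.atBot_mul_pos
      (by exact_mod_cast hn) ((continuous_re.tendsto _).comp (hlim.comp hray)))).congr' ?_
    filter_upwards [self_mem_nhdsWithin] with t ht
    have ht1 : (t : ℂ) - 1 ≠ 0 := by exact_mod_cast (sub_neg.mpr ht).ne
    have hscale : (t : ℂ) * w₀ = ((t / (t - 1) : ℝ) : ℂ) * (t * w₀ - w₀) := by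
      push_cast
      field_simp
    simp only [Function.comp_apply, add_re, one_re]
    rw [hscale, mul_assoc, re_ofReal_mul, ← hscale]
  obtain ⟨t, hneg, ht⟩ := ((hbot.eventually (eventually_lt_atBot 0)).and
    (Ioo_mem_nhdsLT zero_lt_one)).exists
  have htw₀ : (t : ℂ) * w₀ ∈ unitDisk := by
    rw [unitDisk, mem_ball_zero_iff, norm_mul, norm_real, Real.norm_of_nonneg ht.1.le]
    exact mul_lt_one_of_nonneg_of_lt_one_left ht.1.le ht.2 (mem_ball_zero_iff.mp hw₀).le
  exact (hre _ htw₀).not_gt hneg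

lemma re_one_add_sub_mul_nonneg_of_mul_norm_lt_re {L : ℂ → ℂ} {k : ℝ}
    (hL : DifferentiableOn ℂ L unitDisk)
    (H : ∀ w ∈ unitDisk, k * ‖w * L w‖ < (1 + w * L w).re) {z ζ : ℂ} (hz : z ∈ unitDisk)
    (hζ : ‖ζ‖ ≤ k) : 0 ≤ (1 + (z - ζ) * L z).re := by
  have hsubdisk : ∀ t ∈ Ioo ‖z‖ 1, 0 ≤ (1 + (z - t * ζ) * L z).re := by
    rintro t ⟨hzt, ht1⟩
    have ht0 : 0 < t := (norm_nonneg z).trans_lt hzt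
    have hclosure : closure (ball (0 : ℂ) t) ⊆ unitDisk := by
      rw [closure_ball 0 ht0.ne']
      exact closedBall_subset_ball ht1
    have hF : DifferentiableOn ℂ (fun w => 1 + (w - t * ζ) * L w) unitDisk := by fun_prop
    refine re_nonneg_of_forall_mem_frontier_re_nonneg isBounded_ball
      (hF.mono hclosure).diffContOnCl (fun w hw => ?_)
      (subset_closure (mem_ball_zero_iff.mpr hzt))
    rw [frontier_ball 0 ht0.ne', mem_sphere_zero_iff_norm] at hw
    have hwD : w ∈ unitDisk := mem_ball_zero_iff.mpr (hw ▸ ht1)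
    calc 0 ≤ (1 + w * L w).re - k * ‖w * L w‖ := (sub_pos.mpr (H w hwD)).le
      _ ≤ (1 + w * L w).re - ‖(t * ζ) * L w‖ := by
        gcongr
        rw [norm_mul, norm_mul, norm_mul, norm_real, Real.norm_of_nonneg ht0.le, ← hw]
        nlinarith [mul_le_mul_of_nonneg_right hζ
          (mul_nonneg (norm_nonneg w) (norm_nonneg (L w)))]
      _ ≤ (1 + w * L w).re - ((t * ζ) * L w).re := by gcongr; exact re_le_norm _
      _ = (1 + (w - t * ζ) * L w).re := by simp only [sub_mul, add_sub_assoc, add_re, sub_re]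
  have hlim : Tendsto (fun t : ℝ => (1 + (z - t * ζ) * L z).re) (𝓝[<] 1)
      (𝓝 (1 + (z - ζ) * L z).re) :=
    ((show Continuous fun t : ℝ => (1 + (z - t * ζ) * L z).re by fun_prop).tendsto' 1 _
      (by simp)).mono_left nhdsWithin_le_nhds
  exact ge_of_tendsto hlim
    (eventually_of_mem (Ioo_mem_nhdsLT (mem_ball_zero_iff.mp hz)) hsubdisk)

lemma mul_norm_lt_re_of_re_one_add_sub_mul_nonneg {L : ℂ → ℂ} {k : ℝ} (hk : 0 ≤ k)
    (hL : DifferentiableOn ℂ L unitDisk)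
    (H : ∀ w ∈ unitDisk, ∀ ζ : ℂ, ‖ζ‖ ≤ k → 0 ≤ (1 + (w - ζ) * L w).re) {z : ℂ}
    (hz : z ∈ unitDisk) : k * ‖z * L z‖ < (1 + z * L z).re := by
  have hpos : 0 < (1 + z * L z).re :=
    re_pos_of_re_nonneg_of_re_pos (F := fun w => 1 + w * L w)
      (convex_ball 0 1).isPreconnected isOpen_ball (by fun_prop)
      (fun w hw => by simpa using H w hw 0 (by simpa)) (mem_ball_self one_pos) (by simp) hz
  obtain ⟨ζ, hζ, hζL⟩ := exists_norm_le_re_mul_eq hk (L z)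
  have hkL : k * ‖L z‖ ≤ (1 + z * L z).re := by
    have := H z hz ζ hζ
    rw [sub_mul, ← add_sub_assoc, sub_re, hζL] at this
    linarith
  calc k * ‖z * L z‖ = ‖z‖ * (k * ‖L z‖) := by rw [norm_mul]; ring
    _ ≤ ‖z‖ * (1 + z * L z).re := by gcongr
    _ < (1 + z * L z).re := mul_lt_of_lt_one_left hpos (mem_ball_zero_iff.mp hz)

theorem kucv_two_variable_iff_one_variable_general (k : ℝ) (hk : 0 ≤ k) (f : ℂ → ℂ)
    (hf : IsNormalized f) :
    (∀ z ∈ unitDisk, ∀ ζ : ℂ, ‖ζ‖ ≤ k →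
        0 ≤ (1 + (z - ζ) * deriv (deriv f) z / deriv f z).re) ↔
    (∀ z ∈ unitDisk,
        k * ‖z * deriv (deriv f) z / deriv f z‖
          < (1 + z * deriv (deriv f) z / deriv f z).re) := by
  obtain ⟨hdf, -, hf'0⟩ := hf
  have hh : AnalyticOnNhd ℂ (deriv f) unitDisk := (hdf.analyticOnNhd isOpen_ball).deriv
  have hL (hre : ∀ w ∈ unitDisk, 0 ≤ (1 + w * logDeriv (deriv f) w).re) :
      DifferentiableOn ℂ (logDeriv (deriv f)) unitDisk :=
    hh.deriv.differentiableOn.div hh.differentiableOn fun w hw =>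
      ne_zero_of_re_one_add_mul_logDeriv_nonneg hh (by simp [hf'0]) hre hw
  simp only [mul_div_assoc, ← logDeriv_apply]
  constructor
  · intro H z hz
    exact mul_norm_lt_re_of_re_one_add_sub_mul_nonneg hk
      (hL fun w hw => by simpa using H w hw 0 (by simpa)) H hz
  · intro H z hz ζ hζ
    exact re_one_add_sub_mul_nonneg_of_mul_norm_lt_re
      (hL fun w hw => (mul_nonneg hk (norm_nonneg _)).trans (H w hw).le) H hz hζ

/-- the two analytic characterizations of k-uniformly convex
functions agree. -/
theorem kucv_two_variable_iff_one_variable (k : ℝ) (hk : 0 ≤ k) (f : ℂ → ℂ)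
    (hf : IsNormalized f) (hinj : Set.InjOn f unitDisk) :
    (∀ z ∈ unitDisk, ∀ ζ : ℂ, ‖ζ‖ ≤ k →
        0 ≤ (1 + (z - ζ) * deriv (deriv f) z / deriv f z).re) ↔
    (∀ z ∈ unitDisk,
        k * ‖z * deriv (deriv f) z / deriv f z‖
          < (1 + z * deriv (deriv f) z / deriv f z).re) :=
  kucv_two_variable_iff_one_variable_general k hk f hf
end
end
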